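/- arXiv:2110.06244 — 8 statements merged into one kernel-verified Lean document; each statement's English description precedes it below -/
import Mathlib

section
/- The Motzkin number M_n is even if and only if n is of the form 4m·4^k − 2 or 4m·4^k − 1 for some odd m ≥ 1 and k ≥ 0; equivalently, M_n ≡ 0 (mod 2) iff (n+1) or (n+2) is of the form 4·m·4^k with m odd. -/
/-!
Lucas's theorem at `p = 2` gives `C(n, 2k) ≡ C(⌊n/2⌋, k)`, and, through
`(2k+1)·Cat k = C(2k+1, k+1)`, that `Cat k` is odd exactly when `k + 1` is a power of two.
For `k + 1 = 2^r`, `C(N - 1, k)` is odd iff `2^r ∣ N`. So with `N = ⌊n/2⌋ + 1` the odd terms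
of `M_n` are indexed by the powers of two dividing `N`, whence `M_n ≡ v₂(N) + 1 (mod 2)`.
Finally `2N` is `n + 1` or `n + 2`, and `v₂(N)` is odd iff `2N = 4·m·4^k` with `m` odd.
-/

def motzkin (n : ℕ) : ℕ :=
  ∑ k ∈ Finset.range (n / 2 + 1), n.choose (2 * k) * catalan k

open Finset

namespace Nat

lemma isPowerOfTwo_two_mul_iff {n : ℕ} : (2 * n).isPowerOfTwo ↔ n.isPowerOfTwo := by
  constructor
  · rintro ⟨_ | r, hr⟩
    · omega
    · exact ⟨r, by rw [pow_succ] at hr; omega⟩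
  · rintro ⟨r, rfl⟩
    exact ⟨r + 1, by rw [pow_succ, mul_comm]⟩

lemma not_isPowerOfTwo_two_mul_add_three (n : ℕ) : ¬(2 * n + 3).isPowerOfTwo := by
  rintro ⟨_ | r, hr⟩
  · omega
  · rw [pow_succ] at hr; omega

lemma odd_choose_iff (n k : ℕ) :
    Odd (n.choose k) ↔ Odd ((n % 2).choose (k % 2) * (n / 2).choose (k / 2)) := by
  have : Fact (Nat.Prime 2) := ⟨prime_two⟩
  rw [odd_iff, odd_iff]
  exact Eq.congr_left (Choose.choose_modEq_choose_mod_mul_choose_div_nat (p := 2))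

lemma odd_choose_two_mul_iff (n k : ℕ) : Odd (n.choose (2 * k)) ↔ Odd ((n / 2).choose k) := by
  simp [odd_choose_iff]

lemma odd_choose_iff_succ_dvd_succ {k : ℕ} (hk : (k + 1).isPowerOfTwo) (n : ℕ) :
    Odd (n.choose k) ↔ k + 1 ∣ n + 1 := by
  obtain ⟨r, hr⟩ := hk
  induction r generalizing k n with
  | zero => simp_all
  | succ r ih =>
    obtain ⟨j, rfl⟩ : ∃ j, k = 2 * j + 1 := ⟨k / 2, by rw [pow_succ] at hr; omega⟩
    have hj : j + 1 = 2 ^ r := by rw [pow_succ] at hr; omega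
    rw [odd_choose_iff, show 2 * j + 1 + 1 = 2 * (j + 1) by ring]
    rcases n.even_or_odd' with ⟨m, rfl | rfl⟩
    · simp only [mul_add_mod_self_left, mul_mod_right, reduceMod, choose_zero_succ, zero_mul,
        not_odd_zero, false_iff]
      exact fun h => by have := (dvd_mul_right 2 _).trans h; omega
    · simp only [mul_add_mod_self_left, mul_add_div two_pos, reduceMod, reduceDiv, add_zero,
        choose_self, one_mul]
      rw [ih _ hj, show 2 * m + 1 + 1 = 2 * (m + 1) by ring, Nat.mul_dvd_mul_iff_left two_pos]

lemma choose_two_mul_add_one_eq_mul_catalan (k : ℕ) :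
    (2 * k + 1).choose (k + 1) = (2 * k + 1) * catalan k := by
  apply Nat.eq_of_mul_eq_mul_right (by positivity : 0 < k + 1)
  rw [← add_one_mul_choose_eq, ← centralBinom_eq_two_mul_choose,
    ← succ_mul_catalan_eq_centralBinom]
  ring

lemma odd_choose_two_mul_add_one_iff (k : ℕ) :
    Odd ((2 * k + 1).choose (k + 1)) ↔ (k + 1).isPowerOfTwo := by
  induction k using Nat.strong_induction_on with
  | _ k ih =>
  -- Lucas: `C(4a+1, 2a+1) ≡ C(2a, a)`, even unless `a = 0`, and `C(4a+3, 2a+2) ≡ C(2a+1, a+1)`.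
  rcases k.even_or_odd' with ⟨a, rfl | rfl⟩
  · rw [odd_choose_iff]
    simp only [mul_add_mod_self_left, mul_add_div two_pos, reduceMod, reduceDiv, add_zero,
      choose_self, one_mul, ← centralBinom_eq_two_mul_choose]
    rcases a with _ | b
    · simp [isPowerOfTwo_one]
    · rw [show 2 * (b + 1) + 1 = 2 * b + 3 by ring]
      simp only [iff_false_intro (not_isPowerOfTwo_two_mul_add_three b), iff_false,
        not_odd_iff_even, even_iff_two_dvd]
      exact two_dvd_centralBinom_succ b
  · rw [odd_choose_iff, show 2 * a + 1 + 1 = 2 * (a + 1) by ring]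
    simp only [mul_add_mod_self_left, mul_add_div two_pos, mul_mod_right, mul_div_right _ two_pos,
      reduceMod, reduceDiv, add_zero, choose_zero_right, one_mul]
    rw [ih a (by omega), isPowerOfTwo_two_mul_iff]

theorem odd_catalan_iff (k : ℕ) : Odd (catalan k) ↔ (k + 1).isPowerOfTwo := by
  rw [← odd_choose_two_mul_add_one_iff, choose_two_mul_add_one_eq_mul_catalan, Nat.odd_mul]
  simp

lemma factorization_two_pow_mul_of_odd {t m : ℕ} (hm : Odd m) :
    (2 ^ t * m).factorization 2 = t := by
  rw [factorization_mul (by positivity) hm.pos.ne', Finsupp.add_apply, prime_two.factorization_pow,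
    Finsupp.single_eq_same, factorization_eq_zero_of_not_dvd hm.not_two_dvd_nat, add_zero]

lemma odd_factorization_two_iff {N : ℕ} (hN : N ≠ 0) :
    Odd (N.factorization 2) ↔ ∃ m k : ℕ, Odd m ∧ 2 * N = 4 * m * 4 ^ k := by
  obtain ⟨t, m, hm, rfl⟩ := exists_eq_two_pow_mul_odd hN
  have h4 (m k : ℕ) : 4 * m * 4 ^ k = 2 ^ (2 * k + 1 + 1) * m := by
    rw [pow_succ, pow_succ, pow_mul]; ring
  rw [factorization_two_pow_mul_of_odd hm]
  constructor
  · rintro ⟨k, rfl⟩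
    exact ⟨m, k, hm, by rw [h4]; ring⟩
  · rintro ⟨m', k, hm', h⟩
    rw [h4, ← mul_assoc, ← pow_succ'] at h
    have := congrArg (·.factorization 2) h
    simp only [factorization_two_pow_mul_of_odd hm, factorization_two_pow_mul_of_odd hm'] at this
    exact ⟨k, by omega⟩

lemma odd_choose_two_mul_mul_catalan_iff (n k : ℕ) :
    Odd (n.choose (2 * k) * catalan k) ↔ ∃ r, k + 1 = 2 ^ r ∧ 2 ^ r ∣ n / 2 + 1 := by
  rw [Nat.odd_mul, odd_choose_two_mul_iff, odd_catalan_iff]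
  constructor
  · rintro ⟨hc, r, hr⟩
    exact ⟨r, hr, hr ▸ (odd_choose_iff_succ_dvd_succ ⟨r, hr⟩ _).1 hc⟩
  · rintro ⟨r, hr, hdvd⟩
    exact ⟨(odd_choose_iff_succ_dvd_succ ⟨r, hr⟩ _).2 (hr ▸ hdvd), r, hr⟩

end Nat

lemma filter_odd_choose_two_mul_mul_catalan (n : ℕ) :
    {k ∈ range (n / 2 + 1) | Odd (n.choose (2 * k) * catalan k)} =
      (range ((n / 2 + 1).factorization 2 + 1)).image (fun r => 2 ^ r - 1) := by
  ext k
  simp only [mem_filter, mem_range, mem_image, Nat.odd_choose_two_mul_mul_catalan_iff,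
    Nat.lt_succ_iff, ← Nat.prime_two.pow_dvd_iff_le_factorization (Nat.succ_ne_zero (n / 2))]
  constructor
  · rintro ⟨-, r, hr, hdvd⟩
    exact ⟨r, hdvd, by omega⟩
  · rintro ⟨r, hdvd, rfl⟩
    have := Nat.le_of_dvd (Nat.succ_pos _) hdvd
    have := Nat.one_le_two_pow (n := r)
    exact ⟨by omega, r, by omega, hdvd⟩

theorem even_motzkin_iff (n : ℕ) : Even (motzkin n) ↔ Odd ((n / 2 + 1).factorization 2) := by
  rw [motzkin, even_sum_iff_even_card_odd, filter_odd_choose_two_mul_mul_catalan,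
    card_image_of_injective, card_range, Nat.even_add_one, Nat.not_even_iff_odd]
  intro r s (h : 2 ^ r - 1 = 2 ^ s - 1)
  have := Nat.one_le_two_pow (n := r)
  have := Nat.one_le_two_pow (n := s)
  exact Nat.pow_right_injective le_rfl (show 2 ^ r = 2 ^ s by omega)

theorem motzkin_even_iff (n : ℕ) :
    motzkin n % 2 = 0 ↔
      ∃ m k : ℕ, Odd m ∧ (n + 2 = 4 * m * 4 ^ k ∨ n + 1 = 4 * m * 4 ^ k) := by
  rw [← Nat.even_iff, even_motzkin_iff, Nat.odd_factorization_two_iff (by omega)]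
  refine exists₂_congr fun m k => and_congr_right fun _ => ?_
  -- `2 * (n / 2 + 1)` is whichever of `n + 2`, `n + 1` is even.
  obtain ⟨c, hc⟩ : ∃ c, 4 * m * 4 ^ k = 4 * c := ⟨m * 4 ^ k, by ring⟩
  rw [hc]
  omega
end

section
/- There is no index i and period p ≥ 1 such that M_{i+t} ≡ M_{i+t+p} (mod 5) for all 0 ≤ t ≤ 2p, i.e., no factor of exponent strictly greater than 3 occurs in the sequence (M_n mod 5)_{n≥0}. -/
open Finset
namespace M5

instance : Fact (Nat.Prime 5) := ⟨by norm_num⟩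

lemma five0 : (5:ZMod 5) = 0 := by decide

def ac : ℕ → ZMod 5
  | 0 => 1 | 1 => 1 | 2 => 3 | 3 => 2 | _ => 4
def bc : ℕ → ZMod 5
  | 0 => 0 | 1 => 2 | 2 => 4 | 3 => 2 | _ => 2
def rc : ℕ → ZMod 5
  | 0 => 1 | 1 => 1 | 2 => 2 | 3 => 4 | _ => 4
def rd : ℕ → ZMod 5
  | 0 => 0 | 1 => 0 | 2 => 0 | 3 => 2 | _ => 3

def X : ℕ → ZMod 5
  | 0 => 1
  | (n+1) => ac ((n+1) % 5) * X ((n+1)/5)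
  decreasing_by exact Nat.div_lt_self (Nat.succ_pos n) (by norm_num)

def Y : ℕ → ZMod 5
  | 0 => 0
  | (n+1) => bc ((n+1) % 5) * X ((n+1)/5) + (if (n+1) % 5 = 4 then Y ((n+1)/5) else 0)
  decreasing_by exact Nat.div_lt_self (Nat.succ_pos n) (by norm_num)

lemma X_eq (m r : ℕ) (hr : r < 5) : X (5*m+r) = ac r * X m := by
  rcases Nat.eq_zero_or_pos (5*m+r) with h | h
  · have hm : m = 0 := by omega
    have hr0 : r = 0 := by omega
    subst hm; subst hr0; simp [X, ac]
  · obtain ⟨k, hk⟩ : ∃ k, 5*m+r = k+1 := ⟨5*m+r-1, by omega⟩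
    rw [hk, X, ← hk]
    have h1 : (5*m+r) % 5 = r := by omega
    have h2 : (5*m+r) / 5 = m := by omega
    rw [h1, h2]

lemma Y_eq (m r : ℕ) (hr : r < 5) :
    Y (5*m+r) = bc r * X m + (if r = 4 then Y m else 0) := by
  rcases Nat.eq_zero_or_pos (5*m+r) with h | h
  · have hm : m = 0 := by omega
    have hr0 : r = 0 := by omega
    subst hm; subst hr0; simp [Y, X, bc]
  · obtain ⟨k, hk⟩ : ∃ k, 5*m+r = k+1 := ⟨5*m+r-1, by omega⟩
    rw [hk, Y, ← hk]
    have h1 : (5*m+r) % 5 = r := by omega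
    have h2 : (5*m+r) / 5 = m := by omega
    rw [h1, h2]

lemma ac_ne (r : ℕ) : ac r ≠ 0 := by
  match r with
  | 0 => decide | 1 => decide | 2 => decide | 3 => decide | (n+4) => exact (by decide : (4:ZMod 5) ≠ 0)

lemma X_ne : ∀ n, X n ≠ 0 := by
  intro n
  induction n using Nat.strong_induction_on with
  | _ n IH =>
    match n with
    | 0 => simp [X]
    | (k+1) =>
      rw [X]
      exact mul_ne_zero (ac_ne _) (IH _ (Nat.div_lt_self (Nat.succ_pos k) (by norm_num)))

lemma XY_succ : ∀ v, X v + Y v = X (v+1) := by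
  intro v
  induction v using Nat.strong_induction_on with
  | _ v IH =>
    have h5 : v % 5 < 5 := Nat.mod_lt _ (by norm_num)
    have hv : v = 5*(v/5) + v%5 := by omega
    set m := v/5 with hm
    set r := v%5 with hrdef
    interval_cases r
    · rw [hv, X_eq _ _ (by norm_num), Y_eq _ _ (by norm_num),
        show 5*m+0+1 = 5*m+1 by ring, X_eq _ _ (by norm_num)]
      simp [ac, bc]
    · rw [hv, X_eq _ _ (by norm_num), Y_eq _ _ (by norm_num),
        show 5*m+1+1 = 5*m+2 by ring, X_eq _ _ (by norm_num)]
      simp [ac, bc]; ring_nf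
    · rw [hv, X_eq _ _ (by norm_num), Y_eq _ _ (by norm_num),
        show 5*m+2+1 = 5*m+3 by ring, X_eq _ _ (by norm_num)]
      simp [ac, bc]; ring_nf
      rw [show (7:ZMod 5) = 2 by decide]
    · rw [hv, X_eq _ _ (by norm_num), Y_eq _ _ (by norm_num),
        show 5*m+3+1 = 5*m+4 by ring, X_eq _ _ (by norm_num)]
      simp [ac, bc]; ring_nf
    · have hlt : m < v := by omega
      rw [hv, X_eq _ _ (by norm_num), Y_eq _ _ (by norm_num),
        show 5*m+4+1 = 5*(m+1)+0 by ring, X_eq _ _ (by norm_num)]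
      simp only [if_pos rfl]
      rw [← IH m hlt]
      simp [ac, bc]; ring_nf
      rw [show (6:ZMod 5) = 1 by decide]; ring

/-- the motzkin-mod-5 sequence, via the automaton -/
def m5 (n : ℕ) : ZMod 5 := rc (n % 5) * X (n / 5) + rd (n % 5) * Y (n / 5)

lemma m5_eq (v r : ℕ) (hr : r < 5) : m5 (5*v+r) = rc r * X v + rd r * Y v := by
  unfold m5
  have h1 : (5*v+r) % 5 = r := by omega
  have h2 : (5*v+r) / 5 = v := by omega
  rw [h1, h2]

/-- no two consecutive zeros -/
lemma F2 (n : ℕ) : ¬ (m5 n = 0 ∧ m5 (n+1) = 0) := by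
  rintro ⟨h0, h1⟩
  have h5 : n % 5 < 5 := Nat.mod_lt _ (by norm_num)
  have hv : n = 5*(n/5) + n%5 := by omega
  set v := n/5 with hvdef
  set r := n%5 with hrdef
  interval_cases r
  · rw [hv, m5_eq _ _ (by norm_num)] at h0
    simp [rc, rd] at h0
    exact X_ne v h0
  · rw [hv, m5_eq _ _ (by norm_num)] at h0
    simp [rc, rd] at h0
    exact X_ne v h0
  · rw [hv, m5_eq _ _ (by norm_num)] at h0
    simp [rc, rd] at h0
    rcases h0 with h | h
    · exact absurd h (by decide)
    · exact X_ne v h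
  · rw [hv, m5_eq _ _ (by norm_num)] at h0
    rw [hv, show 5*v+3+1 = 5*v+4 by ring, m5_eq _ _ (by norm_num)] at h1
    simp [rc, rd] at h0 h1
    -- 4X+2Y = 0 and 4X+3Y = 0
    have hy : Y v = 0 := by linear_combination h1 - h0
    have hx : (4:ZMod 5) * X v = 0 := by linear_combination h0 - 2*hy
    rcases mul_eq_zero.mp hx with h | h
    · exact absurd h (by decide)
    · exact X_ne v h
  · rw [hv, show 5*v+4+1 = 5*(v+1)+0 by ring, m5_eq _ _ (by norm_num)] at h1
    simp [rc, rd] at h1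
    exact X_ne (v+1) h1

/-- the P-recurrence of Motzkin numbers, mod 5, as automaton fact -/
lemma G (n : ℕ) : ((n:ZMod 5)+4) * m5 (n+2) = (2*(n:ZMod 5)+5) * m5 (n+1) + (3*(n:ZMod 5)+3) * m5 n := by
  have h5 : n % 5 < 5 := Nat.mod_lt _ (by norm_num)
  have hv : n = 5*(n/5) + n%5 := by omega
  have hcast : (n:ZMod 5) = ((n % 5 : ℕ) : ZMod 5) := (ZMod.natCast_mod n 5).symm
  set v := n/5 with hvdef
  set r := n%5 with hrdef
  interval_cases r
  · rw [hcast, hv, m5_eq _ _ (by norm_num),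
      show 5*v+0+1 = 5*v+1 by ring, show 5*v+0+2 = 5*v+2 by ring,
      m5_eq _ _ (by norm_num), m5_eq _ _ (by norm_num)]
    simp [rc, rd]
    ring
  · rw [hcast, hv, m5_eq _ _ (by norm_num),
      show 5*v+1+1 = 5*v+2 by ring, show 5*v+1+2 = 5*v+3 by ring,
      m5_eq _ _ (by norm_num), m5_eq _ _ (by norm_num)]
    simp [rc, rd]
    linear_combination (2 * Y v) * five0
  · rw [hcast, hv, m5_eq _ _ (by norm_num),
      show 5*v+2+1 = 5*v+3 by ring, show 5*v+2+2 = 5*v+4 by ring,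
      m5_eq _ _ (by norm_num), m5_eq _ _ (by norm_num)]
    simp [rc, rd]
    linear_combination (-6 * X v) * five0
  · rw [hcast, hv, m5_eq _ _ (by norm_num),
      show 5*v+3+1 = 5*v+4 by ring, show 5*v+3+2 = 5*(v+1)+0 by ring,
      m5_eq _ _ (by norm_num), m5_eq _ _ (by norm_num), ← XY_succ]
    simp [rc, rd]
    linear_combination (-17 * X v - 10 * Y v) * five0
  · rw [hcast, hv, m5_eq _ _ (by norm_num),
      show 5*v+4+1 = 5*(v+1)+0 by ring, show 5*v+4+2 = 5*(v+1)+1 by ring,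
      m5_eq _ _ (by norm_num), m5_eq _ _ (by norm_num)]
    simp [rc, rd]
    linear_combination (-(X (v+1)) - 12 * X v - 9 * Y v) * five0


/-- cancel an invertible scalar on X-equations -/
lemma Xcancel {a b : ZMod 5} (hne : a ≠ b) (u w : ℕ) (h : a * X u = b * X w) (hXw : X u = X w) : False := by
  rw [hXw] at h
  have : (a - b) * X w = 0 := by linear_combination h
  rcases mul_eq_zero.mp this with h' | h'
  · exact hne (by linear_combination h')
  · exact X_ne w h'

/-- scalar mismatch on same X -/
lemma Xclash {a b : ZMod 5} (hne : a ≠ b) (u : ℕ) (h : a * X u = b * X u) : False :=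
  Xcancel hne u u h rfl

/-- Core lemma: the (X,Y) sequence has no "window" of period q and length 2q. -/
lemma lemmaM : ∀ q, 0 < q → ∀ m0,
    ¬ (∀ t, t < 2*q → X (m0+t) = X (m0+t+q) ∧ Y (m0+t) = Y (m0+t+q)) := by
  intro q
  induction q using Nat.strong_induction_on with
  | _ q IH =>
    intro hq m0 H
    rcases Nat.eq_zero_or_pos (q % 5) with hk0 | hkpos
    · -- q = 5c : descent
      set c := q / 5 with hc
      have hq5 : q = 5*c := by omega
      have hcpos : 0 < c := by omega
      apply IH c (by omega) hcpos (m0/5)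
      intro s hs
      have hbound : 5*(m0/5) ≤ m0 ∧ m0 ≤ 5*(m0/5)+4 := by omega
      have ht : m0 + (5*(m0/5+s)+4 - m0) = 5*(m0/5+s)+4 := by omega
      have htlt : 5*(m0/5+s)+4 - m0 < 2*q := by omega
      have hH := H _ htlt
      rw [ht, show 5*(m0/5+s)+4+q = 5*(m0/5+s+c)+4 by omega] at hH
      rw [X_eq _ _ (by norm_num), X_eq _ _ (by norm_num),
          Y_eq _ _ (by norm_num), Y_eq _ _ (by norm_num)] at hH
      simp only [if_pos rfl] at hH
      have hx : X (m0/5+s) = X (m0/5+s+c) :=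
        mul_left_cancel₀ (ac_ne 4) hH.1
      constructor
      · exact hx
      · have := hH.2
        rw [hx] at this
        exact add_left_cancel this
    · -- q % 5 = k ∈ {1,2,3,4}
      rcases Nat.lt_or_ge q 5 with hlt5 | hge5
      · -- q ∈ {1,2,3,4} : base cases
        have hm5 : m0 % 5 < 5 := by omega
        have hm : m0 = 5*(m0/5) + m0%5 := by omega
        set v := m0/5 with hv
        interval_cases q
        · -- q = 1
          have h0 := (H 0 (by norm_num)).1
          have h1 := H 1 (by norm_num)
          interval_cases hr : (m0 % 5)
          · have := h1.1
            rw [show m0+1+1 = 5*v+2 by omega, show m0+1 = 5*v+1 by omega,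
               X_eq _ _ (by norm_num), X_eq _ _ (by norm_num)] at this
            exact Xclash (by decide : ac 1 ≠ ac 2) v this
          · rw [show m0+0+1 = 5*v+2 by omega, show m0+0 = 5*v+1 by omega,
               X_eq _ _ (by norm_num), X_eq _ _ (by norm_num)] at h0
            exact Xclash (by decide : ac 1 ≠ ac 2) v h0
          · rw [show m0+0+1 = 5*v+3 by omega, show m0+0 = 5*v+2 by omega,
               X_eq _ _ (by norm_num), X_eq _ _ (by norm_num)] at h0
            exact Xclash (by decide : ac 2 ≠ ac 3) v h0
          · rw [show m0+0+1 = 5*v+4 by omega, show m0+0 = 5*v+3 by omega,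
               X_eq _ _ (by norm_num), X_eq _ _ (by norm_num)] at h0
            exact Xclash (by decide : ac 3 ≠ ac 4) v h0
          · have := h1.2
            rw [show m0+1+1 = 5*(v+1)+1 by omega, show m0+1 = 5*(v+1)+0 by omega,
               Y_eq _ _ (by norm_num), Y_eq _ _ (by norm_num)] at this
            simp [bc] at this
            rcases this with h | h
            · exact absurd h (by decide)
            · exact X_ne (v+1) h
        · -- q = 2
          interval_cases hr : (m0 % 5)
          · have := (H 0 (by norm_num)).1
            rw [show m0+0+2 = 5*v+2 by omega, show m0+0 = 5*v+0 by omega,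
               X_eq _ _ (by norm_num), X_eq _ _ (by norm_num)] at this
            exact Xclash (by decide : ac 0 ≠ ac 2) v this
          · have := (H 0 (by norm_num)).1
            rw [show m0+0+2 = 5*v+3 by omega, show m0+0 = 5*v+1 by omega,
               X_eq _ _ (by norm_num), X_eq _ _ (by norm_num)] at this
            exact Xclash (by decide : ac 1 ≠ ac 3) v this
          · have := (H 0 (by norm_num)).1
            rw [show m0+0+2 = 5*v+4 by omega, show m0+0 = 5*v+2 by omega,
               X_eq _ _ (by norm_num), X_eq _ _ (by norm_num)] at this
            exact Xclash (by decide : ac 2 ≠ ac 4) v this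
          · have := (H 2 (by norm_num)).1
            rw [show m0+2+2 = 5*(v+1)+2 by omega, show m0+2 = 5*(v+1)+0 by omega,
               X_eq _ _ (by norm_num), X_eq _ _ (by norm_num)] at this
            exact Xclash (by decide : ac 0 ≠ ac 2) (v+1) this
          · have := (H 1 (by norm_num)).1
            rw [show m0+1+2 = 5*(v+1)+2 by omega, show m0+1 = 5*(v+1)+0 by omega,
               X_eq _ _ (by norm_num), X_eq _ _ (by norm_num)] at this
            exact Xclash (by decide : ac 0 ≠ ac 2) (v+1) this
        · -- q = 3
          interval_cases hr : (m0 % 5)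
          · have := (H 0 (by norm_num)).1
            rw [show m0+0+3 = 5*v+3 by omega, show m0+0 = 5*v+0 by omega,
               X_eq _ _ (by norm_num), X_eq _ _ (by norm_num)] at this
            exact Xclash (by decide : ac 0 ≠ ac 3) v this
          · have := (H 0 (by norm_num)).1
            rw [show m0+0+3 = 5*v+4 by omega, show m0+0 = 5*v+1 by omega,
               X_eq _ _ (by norm_num), X_eq _ _ (by norm_num)] at this
            exact Xclash (by decide : ac 1 ≠ ac 4) v this
          · have := (H 3 (by norm_num)).1
            rw [show m0+3+3 = 5*(v+1)+3 by omega, show m0+3 = 5*(v+1)+0 by omega,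
               X_eq _ _ (by norm_num), X_eq _ _ (by norm_num)] at this
            exact Xclash (by decide : ac 0 ≠ ac 3) (v+1) this
          · have := (H 2 (by norm_num)).1
            rw [show m0+2+3 = 5*(v+1)+3 by omega, show m0+2 = 5*(v+1)+0 by omega,
               X_eq _ _ (by norm_num), X_eq _ _ (by norm_num)] at this
            exact Xclash (by decide : ac 0 ≠ ac 3) (v+1) this
          · have := (H 1 (by norm_num)).1
            rw [show m0+1+3 = 5*(v+1)+3 by omega, show m0+1 = 5*(v+1)+0 by omega,
               X_eq _ _ (by norm_num), X_eq _ _ (by norm_num)] at this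
            exact Xclash (by decide : ac 0 ≠ ac 3) (v+1) this
        · -- q = 4
          interval_cases hr : (m0 % 5)
          · have := (H 0 (by norm_num)).1
            rw [show m0+0+4 = 5*v+4 by omega, show m0+0 = 5*v+0 by omega,
               X_eq _ _ (by norm_num), X_eq _ _ (by norm_num)] at this
            exact Xclash (by decide : ac 0 ≠ ac 4) v this
          · have := (H 4 (by norm_num)).1
            rw [show m0+4+4 = 5*(v+1)+4 by omega, show m0+4 = 5*(v+1)+0 by omega,
               X_eq _ _ (by norm_num), X_eq _ _ (by norm_num)] at this
            exact Xclash (by decide : ac 0 ≠ ac 4) (v+1) this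
          · have := (H 3 (by norm_num)).1
            rw [show m0+3+4 = 5*(v+1)+4 by omega, show m0+3 = 5*(v+1)+0 by omega,
               X_eq _ _ (by norm_num), X_eq _ _ (by norm_num)] at this
            exact Xclash (by decide : ac 0 ≠ ac 4) (v+1) this
          · have := (H 2 (by norm_num)).1
            rw [show m0+2+4 = 5*(v+1)+4 by omega, show m0+2 = 5*(v+1)+0 by omega,
               X_eq _ _ (by norm_num), X_eq _ _ (by norm_num)] at this
            exact Xclash (by decide : ac 0 ≠ ac 4) (v+1) this
          · have := (H 1 (by norm_num)).1
            rw [show m0+1+4 = 5*(v+1)+4 by omega, show m0+1 = 5*(v+1)+0 by omega,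
               X_eq _ _ (by norm_num), X_eq _ _ (by norm_num)] at this
            exact Xclash (by decide : ac 0 ≠ ac 4) (v+1) this
      · -- q ≥ 5, q % 5 = k ≠ 0 : aligned block argument
        set u := m0/5 + 1 with hu
        set c := q/5 with hc
        have hbound : m0 ≤ 5*u ∧ 5*u ≤ m0 + 5 := by omega
        have hX : ∀ r : ℕ, r < 3 → X (5*u+r) = X (5*u+r+q) := by
          intro r hr
          have h := (H (5*u+r-m0) (by omega)).1
          rwa [show m0+(5*u+r-m0) = 5*u+r by omega] at h
        have hk1 : 1 ≤ q % 5 := hkpos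
        have hk2 : q % 5 ≤ 4 := by omega
        interval_cases hk : (q % 5)
        · -- k = 1
          have e0 := hX 0 (by norm_num)
          have e1 := hX 1 (by norm_num)
          rw [show 5*u+0+q = 5*(u+c)+1 by omega, X_eq _ _ (by norm_num),
              X_eq _ _ (by norm_num)] at e0
          rw [show 5*u+1+q = 5*(u+c)+2 by omega, X_eq _ _ (by norm_num),
              X_eq _ _ (by norm_num)] at e1
          -- e0 : 1*Xu = 1*X(u+c), e1 : 1*Xu = 3*X(u+c)
          have hxx : X u = X (u+c) := by
            have := e0; simpa [ac] using this
          exact Xcancel (by decide : ac 1 ≠ ac 2) u (u+c) e1 hxx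
        · -- k = 2
          have e0 := hX 0 (by norm_num)
          have e1 := hX 1 (by norm_num)
          rw [show 5*u+0+q = 5*(u+c)+2 by omega, X_eq _ _ (by norm_num),
              X_eq _ _ (by norm_num)] at e0
          rw [show 5*u+1+q = 5*(u+c)+3 by omega, X_eq _ _ (by norm_num),
              X_eq _ _ (by norm_num)] at e1
          -- e0 : Xu = 3 X', e1 : Xu = 2 X'
          have : ac 2 * X (u+c) = ac 3 * X (u+c) := by
            rw [← e0, ← e1]; simp [ac]
          exact Xclash (by decide : ac 2 ≠ ac 3) (u+c) this
        · -- k = 3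
          have e0 := hX 0 (by norm_num)
          have e1 := hX 1 (by norm_num)
          rw [show 5*u+0+q = 5*(u+c)+3 by omega, X_eq _ _ (by norm_num),
              X_eq _ _ (by norm_num)] at e0
          rw [show 5*u+1+q = 5*(u+c)+4 by omega, X_eq _ _ (by norm_num),
              X_eq _ _ (by norm_num)] at e1
          have : ac 3 * X (u+c) = ac 4 * X (u+c) := by
            rw [← e0, ← e1]; simp [ac]
          exact Xclash (by decide : ac 3 ≠ ac 4) (u+c) this
        · -- k = 4
          have e1 := hX 1 (by norm_num)
          have e2 := hX 2 (by norm_num)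
          rw [show 5*u+1+q = 5*(u+c+1)+0 by omega, X_eq _ _ (by norm_num),
              X_eq _ _ (by norm_num)] at e1
          rw [show 5*u+2+q = 5*(u+c+1)+1 by omega, X_eq _ _ (by norm_num),
              X_eq _ _ (by norm_num)] at e2
          -- e1 : 1*Xu = 1*X'', e2 : 3*Xu = 1*X''
          have : ac 1 * X u = ac 2 * X u := by
            rw [e1]
            have h2 : ac 2 * X u = ac 0 * X (u+c+1) := e2
            rw [h2]
          exact Xclash (by decide : ac 1 ≠ ac 2) u this


/-- Claim C: a motzkin-window with period 5q yields an (X,Y)-window with period q. -/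
lemma claimC (i q : ℕ) (hq : 0 < q)
    (Hw : ∀ t ≤ 2*(5*q), m5 (i+t) = m5 (i+t+5*q)) :
    ∀ t, t < 2*q → X ((i+1)/5+t) = X ((i+1)/5+t+q) ∧ Y ((i+1)/5+t) = Y ((i+1)/5+t+q) := by
  intro t ht
  set m := (i+1)/5 + t with hm
  have hb1 : i ≤ 5*m+3 := by omega
  have hb2 : 5*m+4 ≤ i + 2*(5*q) := by omega
  -- window equalities at positions 5m+r for r with i ≤ 5m+r
  have key : ∀ r : ℕ, r < 5 → i ≤ 5*m+r → m5 (5*m+r) = m5 (5*(m+q)+r) := by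
    intro r hr hir
    have h := Hw (5*m+r-i) (by omega)
    rwa [show i+(5*m+r-i) = 5*m+r by omega,
         show 5*m+r+5*q = 5*(m+q)+r by ring] at h
  rcases le_or_gt i (5*m) with hile | hgt
  · -- use r = 0 and r = 3
    have e0 := key 0 (by norm_num) (by omega)
    have e3 := key 3 (by norm_num) (by omega)
    rw [m5_eq _ _ (by norm_num), m5_eq _ _ (by norm_num)] at e0 e3
    simp [rc, rd] at e0 e3
    refine ⟨e0, ?_⟩
    rw [e0] at e3
    have : (2:ZMod 5) * Y m = 2 * Y (m+q) := by linear_combination e3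
    exact mul_left_cancel₀ (by decide : (2:ZMod 5) ≠ 0) this
  · -- i ∈ (5m, 5m+3]: use r = 3 and r = 4
    have e3 := key 3 (by norm_num) (by omega)
    have e4 := key 4 (by norm_num) (by omega)
    rw [m5_eq _ _ (by norm_num), m5_eq _ _ (by norm_num)] at e3 e4
    simp [rc, rd] at e3 e4
    have hy : Y m = Y (m+q) := by linear_combination e4 - e3
    have hx4 : (4:ZMod 5) * X m = 4 * X (m+q) := by linear_combination e3 - 2*hy
    exact ⟨mul_left_cancel₀ (by decide : (4:ZMod 5) ≠ 0) hx4, hy⟩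


/-! ### Part 1 : Motzkin numbers mod 5 via Lucas' theorem -/

def b5 (j : ℕ) : ZMod 5 := (((2*j).choose j : ℕ) : ZMod 5)

lemma lucas5 (a b c d : ℕ) (hb : b < 5) (hd : d < 5) :
    (((5*a+b).choose (5*c+d) : ℕ) : ZMod 5)
      = ((a.choose c : ℕ) : ZMod 5) * ((b.choose d : ℕ) : ZMod 5) := by
  have h := Choose.choose_modEq_choose_mod_mul_choose_div_nat (n := 5*a+b) (k := 5*c+d) (p := 5)
  have hcast := (ZMod.natCast_eq_natCast_iff _ _ _).mpr h
  rw [hcast]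
  push_cast
  rw [show (5*a+b) % 5 = b by omega, show (5*a+b)/5 = a by omega,
      show (5*c+d) % 5 = d by omega, show (5*c+d)/5 = c by omega]
  ring

lemma b5_0 (j : ℕ) : b5 (5*j) = b5 j := by
  unfold b5
  rw [show 2*(5*j) = 5*(2*j)+0 by ring, show 5*j = 5*j+0 by ring,
      lucas5 _ _ _ _ (by norm_num) (by norm_num)]
  norm_num

lemma b5_1 (j : ℕ) : b5 (5*j+1) = 2 * b5 j := by
  unfold b5
  rw [show 2*(5*j+1) = 5*(2*j)+2 by ring,
      lucas5 _ _ _ _ (by norm_num) (by norm_num)]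
  norm_num [mul_comm]

lemma b5_2 (j : ℕ) : b5 (5*j+2) = b5 j := by
  unfold b5
  rw [show 2*(5*j+2) = 5*(2*j)+4 by ring,
      lucas5 _ _ _ _ (by norm_num) (by norm_num)]
  rw [show ((4:ℕ).choose 2) = 6 by decide]
  rw [show ((6:ℕ) : ZMod 5) = 1 by decide]
  ring

lemma b5_3 (j : ℕ) : b5 (5*j+3) = 0 := by
  unfold b5
  rw [show 2*(5*j+3) = 5*(2*j+1)+1 by ring,
      lucas5 _ _ _ _ (by norm_num) (by norm_num)]
  rw [show ((1:ℕ).choose 3) = 0 by decide]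
  norm_num

lemma b5_4 (j : ℕ) : b5 (5*j+4) = 0 := by
  unfold b5
  rw [show 2*(5*j+4) = 5*(2*j+1)+3 by ring,
      lucas5 _ _ _ _ (by norm_num) (by norm_num)]
  rw [show ((3:ℕ).choose 4) = 0 by decide]
  norm_num

lemma catcast (k : ℕ) : ((k:ZMod 5)+1) * ((catalan k : ℕ) : ZMod 5) = b5 k := by
  have h := succ_mul_catalan_eq_centralBinom k
  rw [Nat.centralBinom_eq_two_mul_choose] at h
  have := congrArg (Nat.cast : ℕ → ZMod 5) h
  push_cast at this
  unfold b5
  linear_combination this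

lemma natmul5 (j : ℕ) : ((5*j : ℕ) : ZMod 5) = 0 := by
  push_cast
  rw [five0]
  ring

lemma cat_0 (j : ℕ) : ((catalan (5*j) : ℕ) : ZMod 5) = b5 j := by
  have h := catcast (5*j)
  rw [b5_0, natmul5] at h
  linear_combination h

lemma cat_1 (j : ℕ) : ((catalan (5*j+1) : ℕ) : ZMod 5) = b5 j := by
  have h := catcast (5*j+1)
  rw [b5_1] at h
  have h2 : ((5*j+1 : ℕ) : ZMod 5) = 1 := by push_cast [five0]; ring
  rw [h2] at h
  have := mul_left_cancel₀ (by decide : (2:ZMod 5) ≠ 0)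
    (show (2:ZMod 5) * ((catalan (5*j+1) : ℕ) : ZMod 5) = 2 * b5 j by linear_combination h)
  exact this

lemma cat_2 (j : ℕ) : ((catalan (5*j+2) : ℕ) : ZMod 5) = 2 * b5 j := by
  have h := catcast (5*j+2)
  rw [b5_2] at h
  have h2 : ((5*j+2 : ℕ) : ZMod 5) = 2 := by push_cast [five0]; ring
  rw [h2] at h
  have := mul_left_cancel₀ (by decide : (3:ZMod 5) ≠ 0)
    (show (3:ZMod 5) * ((catalan (5*j+2) : ℕ) : ZMod 5) = 3 * (2 * b5 j) by
      linear_combination h + (-(b5 j)) * five0)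
  exact this

lemma cat_3 (j : ℕ) : ((catalan (5*j+3) : ℕ) : ZMod 5) = 0 := by
  have h := catcast (5*j+3)
  rw [b5_3] at h
  have h2 : ((5*j+3 : ℕ) : ZMod 5) = 3 := by push_cast [five0]; ring
  rw [h2] at h
  have := mul_left_cancel₀ (by decide : (4:ZMod 5) ≠ 0)
    (show (4:ZMod 5) * ((catalan (5*j+3) : ℕ) : ZMod 5) = 4 * 0 by linear_combination h)
  simpa using this

lemma cat_plus (k : ℕ) : catalan k + (2*k).choose (k+1) = (2*k).choose k := by
  have h1 : (k+1) * catalan k = (2*k).choose k := by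
    rw [← Nat.centralBinom_eq_two_mul_choose]
    exact succ_mul_catalan_eq_centralBinom k
  have h2 : (2*k).choose (k+1) * (k+1) = (2*k).choose k * k := by
    have := Nat.choose_succ_right_eq (2*k) k
    rwa [show 2*k - k = k by omega] at this
  have h3 : (k+1) * (catalan k + (2*k).choose (k+1)) = (k+1) * ((2*k).choose k) := by
    calc (k+1) * (catalan k + (2*k).choose (k+1))
        = (k+1) * catalan k + (2*k).choose (k+1) * (k+1) := by ring
      _ = (2*k).choose k + (2*k).choose k * k := by rw [h1, h2]
      _ = (k+1) * ((2*k).choose k) := by ring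
  exact Nat.eq_of_mul_eq_mul_left (Nat.succ_pos k) h3

lemma cat_4 (j : ℕ) : ((catalan (5*j+4) : ℕ) : ZMod 5) = 2 * b5 (j+1) := by
  have h := cat_plus (5*j+4)
  have hcast := congrArg (Nat.cast : ℕ → ZMod 5) h
  push_cast at hcast
  have hA : (((2*(5*j+4)).choose (5*j+4) : ℕ) : ZMod 5) = 0 := by
    rw [show 2*(5*j+4) = 5*(2*j+1)+3 by ring,
        lucas5 _ _ _ _ (by norm_num) (by norm_num)]
    rw [show ((3:ℕ).choose 4) = 0 by decide]
    norm_num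
  have hB : (((2*(5*j+4)).choose (5*j+4+1) : ℕ) : ZMod 5)
      = (((2*j+1).choose (j+1) : ℕ) : ZMod 5) := by
    rw [show 2*(5*j+4) = 5*(2*j+1)+3 by ring, show 5*j+4+1 = 5*(j+1)+0 by ring,
        lucas5 _ _ _ _ (by norm_num) (by norm_num)]
    norm_num
  have hD : b5 (j+1) = 2 * (((2*j+1).choose (j+1) : ℕ) : ZMod 5) := by
    unfold b5
    rw [show 2*(j+1) = (2*j+1)+1 by ring]
    rw [Nat.choose_succ_succ (2*j+1) j]
    have hsymm : (2*j+1).choose j = (2*j+1).choose (j+1) := by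
      have := Nat.choose_symm (show j+1 ≤ 2*j+1 by omega)
      rwa [show 2*j+1-(j+1) = j by omega] at this
    rw [hsymm]
    push_cast
    ring
  rw [show (5*j+4+1) = 5*j+4+1 from rfl] at hcast
  -- hcast : cat + castC' = castC
  rw [show ((2:ℕ)*(5*j+4)) = 2*(5*j+4) from rfl] at hcast
  linear_combination hcast + hA - hB - 2 * hD
    - (((2*j+1).choose (j+1) : ℕ) : ZMod 5) * five0

/-- split a sum over range (5K) into blocks of 5 -/
lemma sum5 (f : ℕ → ZMod 5) (K : ℕ) :
    ∑ j ∈ range (5*K), f j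
      = ∑ i ∈ range K, (f (5*i) + f (5*i+1) + f (5*i+2) + f (5*i+3) + f (5*i+4)) := by
  induction K with
  | zero => simp
  | succ K ih =>
      rw [show 5*(K+1) = 5*K+1+1+1+1+1 by ring, sum_range_succ, sum_range_succ,
        sum_range_succ, sum_range_succ, sum_range_succ, ih, sum_range_succ]
      rw [show 5*K+1+1+1+1 = 5*K+4 by ring, show 5*K+1+1+1 = 5*K+3 by ring,
          show 5*K+1+1 = 5*K+2 by ring]
      ring

lemma pad_sum (n a N : ℕ) (c : ℕ → ℕ) (g : ℕ → ZMod 5) (hN : a ≤ N)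
    (hc : ∀ j, a ≤ j → n < c j) :
    ∑ j ∈ range a, ((n.choose (c j) : ℕ) : ZMod 5) * g j
      = ∑ j ∈ range N, ((n.choose (c j) : ℕ) : ZMod 5) * g j := by
  apply Finset.sum_subset
  · exact Finset.range_subset_range.mpr hN
  · intro j hj hnj
    rw [Nat.choose_eq_zero_of_lt (hc j (by simp only [Finset.mem_range] at hnj; omega))]
    simp

def A0 (n : ℕ) : ZMod 5 := ∑ j ∈ range (n+1), ((n.choose (2*j) : ℕ) : ZMod 5) * b5 j
def A1 (n : ℕ) : ZMod 5 := ∑ j ∈ range (n+1), ((n.choose (2*j+1) : ℕ) : ZMod 5) * b5 (j+1)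

lemma A0_rec (m r : ℕ) (hr : r < 5) :
    A0 (5*m+r) = (1 + 2*((r.choose 2 : ℕ):ZMod 5) + ((r.choose 4 : ℕ):ZMod 5)) * A0 m := by
  unfold A0
  rw [pad_sum (5*m+r) (5*m+r+1) (5*(m+1)) (fun j => 2*j) b5 (by omega) (fun j hj => by show 5*m+r < 2*j; omega)]
  rw [sum5 (fun j => (((5*m+r).choose (2*j) : ℕ):ZMod 5) * b5 j) (m+1)]
  rw [Finset.mul_sum]
  apply Finset.sum_congr rfl
  intro i _
  rw [show 2*(5*i+4) = 5*(2*i+1)+3 by ring, show 2*(5*i+3) = 5*(2*i+1)+1 by ring,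
      show 2*(5*i+2) = 5*(2*i)+4 by ring, show 2*(5*i+1) = 5*(2*i)+2 by ring,
      show 2*(5*i) = 5*(2*i)+0 by ring]
  rw [lucas5 m r (2*i) 0 hr (by norm_num), lucas5 m r (2*i) 2 hr (by norm_num),
      lucas5 m r (2*i) 4 hr (by norm_num), lucas5 m r (2*i+1) 1 hr (by norm_num),
      lucas5 m r (2*i+1) 3 hr (by norm_num)]
  rw [b5_1, b5_2, b5_3, b5_4]
  rw [show (5*i : ℕ) = 5*i from rfl, b5_0]
  rw [show ((r.choose 0 : ℕ) : ZMod 5) = 1 by norm_num]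
  ring

lemma A1_rec (m r : ℕ) (hr : r < 5) :
    A1 (5*m+r) = (2*((r.choose 1 : ℕ):ZMod 5) + ((r.choose 3 : ℕ):ZMod 5)) * A0 m
      + ((r.choose 4 : ℕ):ZMod 5) * A1 m := by
  unfold A1 A0
  rw [pad_sum (5*m+r) (5*m+r+1) (5*(m+1)) (fun j => 2*j+1) (fun j => b5 (j+1))
      (by omega) (fun j hj => by show 5*m+r < 2*j+1; omega)]
  rw [sum5 (fun j => (((5*m+r).choose (2*j+1) : ℕ):ZMod 5) * b5 (j+1)) (m+1)]
  rw [Finset.mul_sum, Finset.mul_sum, ← Finset.sum_add_distrib]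
  apply Finset.sum_congr rfl
  intro i _
  rw [show 2*(5*i+4)+1 = 5*(2*i+1)+4 by ring, show 2*(5*i+3)+1 = 5*(2*i+1)+2 by ring,
      show 2*(5*i+2)+1 = 5*(2*i+1)+0 by ring, show 2*(5*i+1)+1 = 5*(2*i)+3 by ring,
      show 2*(5*i)+1 = 5*(2*i)+1 by ring]
  rw [lucas5 m r (2*i) 1 hr (by norm_num), lucas5 m r (2*i) 3 hr (by norm_num),
      lucas5 m r (2*i+1) 0 hr (by norm_num), lucas5 m r (2*i+1) 2 hr (by norm_num),
      lucas5 m r (2*i+1) 4 hr (by norm_num)]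
  rw [show 5*i+4+1 = 5*(i+1) by ring, b5_0]
  rw [show 5*i+3+1 = 5*i+4 by ring, b5_4]
  rw [show 5*i+2+1 = 5*i+3 by ring, b5_3]
  rw [show 5*i+1+1 = 5*i+2 by ring, b5_2]
  rw [show 5*i+0+1 = 5*i+1 by ring, b5_1]
  rw [show ((r.choose 0 : ℕ) : ZMod 5) = 1 by norm_num]
  ring

lemma mz_rec (m r : ℕ) (hr : r < 5) :
    ((motzkin (5*m+r) : ℕ) : ZMod 5)
      = (1 + ((r.choose 2 : ℕ):ZMod 5) + 2*((r.choose 4 : ℕ):ZMod 5)) * A0 m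
        + 2*((r.choose 3 : ℕ):ZMod 5) * A1 m := by
  unfold motzkin
  push_cast
  rw [pad_sum (5*m+r) ((5*m+r)/2+1) (5*(m+1)) (fun k => 2*k)
      (fun k => ((catalan k : ℕ) : ZMod 5)) (by omega) (fun j hj => by show 5*m+r < 2*j; omega)]
  rw [sum5 (fun k => (((5*m+r).choose (2*k) : ℕ):ZMod 5) * ((catalan k : ℕ):ZMod 5)) (m+1)]
  unfold A0 A1
  rw [Finset.mul_sum, Finset.mul_sum, ← Finset.sum_add_distrib]
  apply Finset.sum_congr rfl
  intro i _
  rw [show 2*(5*i+4) = 5*(2*i+1)+3 by ring, show 2*(5*i+3) = 5*(2*i+1)+1 by ring,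
      show 2*(5*i+2) = 5*(2*i)+4 by ring, show 2*(5*i+1) = 5*(2*i)+2 by ring,
      show 2*(5*i) = 5*(2*i)+0 by ring]
  rw [lucas5 m r (2*i) 0 hr (by norm_num), lucas5 m r (2*i) 2 hr (by norm_num),
      lucas5 m r (2*i) 4 hr (by norm_num), lucas5 m r (2*i+1) 1 hr (by norm_num),
      lucas5 m r (2*i+1) 3 hr (by norm_num)]
  rw [cat_1, cat_2, cat_3, cat_4]
  rw [show (5*i : ℕ) = 5*i from rfl, cat_0]
  rw [show ((r.choose 0 : ℕ) : ZMod 5) = 1 by norm_num]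
  ring

lemma A0_eq_X : ∀ m, A0 m = X m := by
  intro m
  induction m using Nat.strong_induction_on with
  | _ m IH =>
    rcases Nat.eq_zero_or_pos m with h0 | hpos
    · subst h0
      rw [show (0:ℕ) = 5*0+0 by ring, A0_rec 0 0 (by norm_num)]
      unfold A0
      simp [b5, X]
    · have h5 : m % 5 < 5 := by omega
      have hm : m = 5*(m/5) + m%5 := by omega
      have hlt : m/5 < m := Nat.div_lt_self hpos (by norm_num)
      rw [hm, A0_rec _ _ h5, X_eq _ _ h5, IH _ hlt]
      congr 1
      set r := m % 5
      interval_cases r <;> simp [ac] <;> decide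

lemma A1_eq_Y : ∀ m, A1 m = Y m := by
  intro m
  induction m using Nat.strong_induction_on with
  | _ m IH =>
    rcases Nat.eq_zero_or_pos m with h0 | hpos
    · subst h0
      unfold A1
      simp [Y]
    · have h5 : m % 5 < 5 := by omega
      have hm : m = 5*(m/5) + m%5 := by omega
      have hlt : m/5 < m := Nat.div_lt_self hpos (by norm_num)
      rw [hm, A1_rec _ _ h5, Y_eq _ _ h5, A0_eq_X, IH _ hlt]
      set r := m % 5
      interval_cases r
      · rw [show (0:ℕ).choose 1 = 0 by decide, show (0:ℕ).choose 3 = 0 by decide,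
            show (0:ℕ).choose 4 = 0 by decide, show bc 0 = 0 from rfl,
            if_neg (by decide : ¬(0:ℕ) = 4)]
        push_cast; ring
      · rw [show (1:ℕ).choose 1 = 1 by decide, show (1:ℕ).choose 3 = 0 by decide,
            show (1:ℕ).choose 4 = 0 by decide, show bc 1 = 2 from rfl,
            if_neg (by decide : ¬(1:ℕ) = 4)]
        push_cast; ring
      · rw [show (2:ℕ).choose 1 = 2 by decide, show (2:ℕ).choose 3 = 0 by decide,
            show (2:ℕ).choose 4 = 0 by decide, show bc 2 = 4 from rfl,
            if_neg (by decide : ¬(2:ℕ) = 4)]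
        push_cast; ring
      · rw [show (3:ℕ).choose 1 = 3 by decide, show (3:ℕ).choose 3 = 1 by decide,
            show (3:ℕ).choose 4 = 0 by decide, show bc 3 = 2 from rfl,
            if_neg (by decide : ¬(3:ℕ) = 4)]
        push_cast
        linear_combination (X (m/5)) * five0
      · rw [show (4:ℕ).choose 1 = 4 by decide, show (4:ℕ).choose 3 = 4 by decide,
            show (4:ℕ).choose 4 = 1 by decide, show bc 4 = 2 from rfl,
            if_pos rfl]
        push_cast
        linear_combination (2 * X (m/5)) * five0

/-- Part 1 : motzkin mod 5 equals the automaton value. -/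
lemma motzkin_m5 (n : ℕ) : ((motzkin n : ℕ) : ZMod 5) = m5 n := by
  have h5 : n % 5 < 5 := by omega
  have hm : n = 5*(n/5) + n%5 := by omega
  conv_lhs => rw [hm]
  conv_rhs => rw [hm]
  rw [mz_rec _ _ h5, m5_eq _ _ h5, A0_eq_X, A1_eq_Y]
  set r := n % 5
  interval_cases r
  · rw [show (0:ℕ).choose 2 = 0 by decide, show (0:ℕ).choose 3 = 0 by decide,
        show (0:ℕ).choose 4 = 0 by decide, show rc 0 = 1 from rfl, show rd 0 = 0 from rfl]
    push_cast; ring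
  · rw [show (1:ℕ).choose 2 = 0 by decide, show (1:ℕ).choose 3 = 0 by decide,
        show (1:ℕ).choose 4 = 0 by decide, show rc 1 = 1 from rfl, show rd 1 = 0 from rfl]
    push_cast; ring
  · rw [show (2:ℕ).choose 2 = 1 by decide, show (2:ℕ).choose 3 = 0 by decide,
        show (2:ℕ).choose 4 = 0 by decide, show rc 2 = 2 from rfl, show rd 2 = 0 from rfl]
    push_cast; ring
  · rw [show (3:ℕ).choose 2 = 3 by decide, show (3:ℕ).choose 3 = 1 by decide,
        show (3:ℕ).choose 4 = 0 by decide, show rc 3 = 4 from rfl, show rd 3 = 2 from rfl]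
    push_cast; ring
  · rw [show (4:ℕ).choose 2 = 6 by decide, show (4:ℕ).choose 3 = 4 by decide,
        show (4:ℕ).choose 4 = 1 by decide, show rc 4 = 4 from rfl, show rd 4 = 3 from rfl]
    push_cast
    linear_combination (X (n/5) + Y (n/5)) * five0

end M5

theorem motzkin_mod_five_no_exponent_gt_three :
    ¬ ∃ (i p : ℕ), 1 ≤ p ∧
      ∀ t ≤ 2 * p, motzkin (i + t) % 5 = motzkin (i + t + p) % 5 := by
  rintro ⟨i, p, hp, hw⟩
  -- convert to ZMod 5 and the automaton sequence
  have Hw : ∀ t, t ≤ 2*p → M5.m5 (i+t) = M5.m5 (i+t+p) := by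
    intro t ht
    have h := hw t ht
    have : ((motzkin (i+t) : ℕ) : ZMod 5) = ((motzkin (i+t+p) : ℕ) : ZMod 5) := by
      rw [ZMod.natCast_eq_natCast_iff]
      exact h
    rwa [M5.motzkin_m5, M5.motzkin_m5] at this
  rcases Nat.eq_zero_or_pos (p % 5) with hp5 | hp5
  · -- p = 5q
    set q := p / 5 with hq
    have hqpos : 0 < q := by omega
    have hpq : p = 5*q := by omega
    apply M5.lemmaM q hqpos ((i+1)/5)
    apply M5.claimC i q hqpos
    intro t ht
    have := Hw t (by omega)
    rwa [hpq] at this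
  · -- 5 ∤ p : P-recurrence argument
    have hpne : ((p:ℕ) : ZMod 5) ≠ 0 := by
      intro h
      rw [ZMod.natCast_eq_zero_iff] at h
      omega
    -- E1 : for n with window margin, m5(n+2) = 2 m5(n+1) + 3 m5(n)
    have E1 : ∀ j, j + 2 ≤ 2*p → M5.m5 (i+j+2) = 2 * M5.m5 (i+j+1) + 3 * M5.m5 (i+j) := by
      intro j hj
      have g1 := M5.G (i+j)
      have g2 := M5.G (i+j+p)
      have w0 := Hw j (by omega)
      have w1 := Hw (j+1) (by omega)
      have w2 := Hw (j+2) (by omega)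
      rw [show i+(j+1) = i+j+1 by ring] at w1
      rw [show i+(j+2) = i+j+2 by ring] at w2
      rw [show i+j+1+p = i+j+p+1 by ring] at w1
      rw [show i+j+2+p = i+j+p+2 by ring] at w2
      rw [← w0, ← w1, ← w2] at g2
      push_cast at g1 g2
      -- subtract : p * (m5(n+2) - 2 m5(n+1) - 3 m5(n)) = 0
      have hsub : ((p:ℕ):ZMod 5) * (M5.m5 (i+j+2) - 2 * M5.m5 (i+j+1) - 3 * M5.m5 (i+j)) = 0 := by
        linear_combination g2 - g1
      rcases mul_eq_zero.mp hsub with h | h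
      · exact absurd h hpne
      · linear_combination h
    -- E2 : m5(n+1) = 2 m5(n)
    have E2 : ∀ j, j + 2 ≤ 2*p → M5.m5 (i+j+1) = 2 * M5.m5 (i+j) := by
      intro j hj
      have g1 := M5.G (i+j)
      have e1 := E1 j hj
      rw [e1] at g1
      push_cast at g1
      -- (n+4)(2a+3b) = (2n+5)a + (3n+3)b  =>  3a = b  => a = 2b
      have h3 : (3:ZMod 5) * M5.m5 (i+j+1) = 3 * (2 * M5.m5 (i+j)) := by
        linear_combination g1 + (- 3 * M5.m5 (i+j)) * M5.five0
      exact mul_left_cancel₀ (by decide : (3:ZMod 5) ≠ 0) h3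
    rcases Nat.lt_or_ge p 2 with hp2 | hp2
    · -- p = 1
      have hp1 : p = 1 := by omega
      have e2 := E2 0 (by omega)
      have w0 := Hw 0 (by omega)
      rw [show i+0 = i by ring] at w0 e2
      rw [hp1, show i+1 = i+0+1 by ring] at w0
      rw [show i+0+1 = i+1 by ring] at w0 e2
      -- w0 : m5 i = m5 (i+1),  e2 : m5 (i+1) = 2 m5 i
      have hz : M5.m5 i = 0 := by
        have : (1 - 2 : ZMod 5) * M5.m5 i = 0 := by
          linear_combination w0 + e2
        have h' := mul_eq_zero.mp this
        rcases h' with h | h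
        · exact absurd h (by decide)
        · exact h
      have hz1 : M5.m5 (i+1) = 0 := by rw [← w0]; exact hz
      exact M5.F2 i ⟨hz, hz1⟩
    · -- p ≥ 2
      have e2a := E2 0 (by omega)
      have e2b := E2 1 (by omega)
      have e1 := E1 0 (by omega)
      rw [show i+0 = i by ring] at e2a e1
      rw [show i+0+1 = i+1 by ring] at e2a e1
      rw [show i+0+2 = i+2 by ring] at e1
      rw [show i+1+1 = i+2 by ring] at e2b
      -- e1 : m5(i+2) = 2 m5(i+1) + 3 m5(i) ; e2b : m5(i+2) = 2 m5(i+1)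
      have hz : M5.m5 i = 0 := by
        have h3 : (3:ZMod 5) * M5.m5 i = 0 := by linear_combination e2b - e1
        rcases mul_eq_zero.mp h3 with h | h
        · exact absurd h (by decide)
        · exact h
      have hz1 : M5.m5 (i+1) = 0 := by rw [e2a, hz]; ring
      exact M5.F2 i ⟨hz, hz1⟩
end

section
/- The only cubes in the sequence (M_n mod 5)_{n≥0} have period 1: if p ≥ 1 and i ≥ 0 satisfy M_{i+t} ≡ M_{i+t+p} (mod 5) for all 0 ≤ t < 2p, then p = 1. Moreover each of the cubes 111, 222, 333, 444 occurs in the sequence. -/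
open Finset Polynomial

section EvenChooseSum

variable {R : Type*} [CommSemiring R]

def evenChooseSum (f : ℕ → R) (n : ℕ) : R :=
  ∑ k ∈ range (n / 2 + 1), (n.choose (2 * k) : R) * f k

theorem evenChooseSum_eq_sum_range (f : ℕ → R) {n N : ℕ} (hN : n / 2 < N) :
    evenChooseSum f n = ∑ k ∈ range N, (n.choose (2 * k) : R) * f k := by
  refine sum_subset (range_subset_range.2 hN) fun k _ hk ↦ ?_
  rw [mem_range, not_lt] at hk
  rw [Nat.choose_eq_zero_of_lt (by omega), Nat.cast_zero, zero_mul]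

theorem evenChooseSum_add_two (f : ℕ → R) (n : ℕ) :
    evenChooseSum f (n + 2) + evenChooseSum f n =
      2 * evenChooseSum f (n + 1) + evenChooseSum (fun k ↦ f (k + 1)) n := by
  have hshift : ∀ j ≤ 2, evenChooseSum f (n + j) =
      ∑ k ∈ range (n + 2), ((n + j).choose (2 * k + 2) : R) * f (k + 1) + f 0 := by
    intro j hj
    rw [evenChooseSum_eq_sum_range f (N := n + 3) (by omega), sum_range_succ']
    simp [mul_add]
  have h₀ := hshift 0 (by omega)
  rw [add_zero] at h₀
  rw [h₀, hshift 1 (by omega), hshift 2 (by omega),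
    evenChooseSum_eq_sum_range _ (N := n + 2) (by omega)]
  simp only [Nat.choose_succ_succ', show n + 2 = n + 1 + 1 by rfl, Nat.cast_add, add_mul,
    sum_add_distrib]
  ring

theorem Nat.cast_evenChooseSum (f : ℕ → ℕ) (n : ℕ) :
    ((evenChooseSum f n : ℕ) : R) = evenChooseSum (fun k ↦ (f k : R)) n := by
  simp [evenChooseSum]

theorem evenChooseSum_mul_add_mul (a b : R) (f g : ℕ → R) (n : ℕ) :
    evenChooseSum (fun k ↦ a * f k + b * g k) n =
      a * evenChooseSum f n + b * evenChooseSum g n := by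
  simp only [evenChooseSum, mul_add, sum_add_distrib, mul_sum, mul_left_comm]

end EvenChooseSum

theorem motzkin_eq_evenChooseSum (n : ℕ) : motzkin n = evenChooseSum catalan n := by
  simp [motzkin, evenChooseSum]

def centralTrinomial (n : ℕ) : ℕ := evenChooseSum Nat.centralBinom n

section CentralTrinomial

variable {R : Type*} [CommSemiring R]

theorem coeff_one_add_X_add_X_sq_pow (n : ℕ) :
    ((1 + X + X ^ 2 : R[X]) ^ n).coeff n = centralTrinomial n := by
  rw [centralTrinomial, evenChooseSum_eq_sum_range _ (N := n + 1) (by omega), Nat.cast_sum,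
    show (1 + X + X ^ 2 : R[X]) = X ^ 2 + (1 + X) by ring, add_pow, finsetSum_coeff]
  refine sum_congr rfl fun k _ ↦ ?_
  rw [← pow_mul, coeff_mul_natCast, coeff_X_pow_mul', coeff_one_add_X_pow]
  split_ifs with hk
  · have h : (n - k).choose (n - 2 * k) * n.choose k = n.choose (2 * k) * k.centralBinom := by
      rw [Nat.centralBinom_eq_two_mul_choose, Nat.choose_mul (by omega),
        show 2 * k - k = k by omega, ← Nat.choose_symm (by omega : k ≤ n - k),
        show n - k - k = n - 2 * k by omega, mul_comm]
    rw [Nat.cast_id, ← Nat.cast_mul, h]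
  · rw [Nat.choose_eq_zero_of_lt (by omega : n < 2 * k)]
    simp

theorem coeff_expand_mul_of_natDegree_lt {p : ℕ} (hp : 0 < p) (f g : R[X]) (n : ℕ) {r : ℕ}
    (hr : r < p) (hg : g.natDegree < p + r) :
    (expand R p f * g).coeff (p * n + r) = f.coeff n * g.coeff r := by
  rw [coeff_mul, sum_eq_single_of_mem (p * n, r) (mem_antidiagonal.2 rfl), coeff_expand_mul' hp]
  rintro ⟨x, y⟩ hxy hne
  rw [HasAntidiagonal.mem_antidiagonal] at hxy
  by_cases hx : p ∣ x
  · obtain ⟨c, rfl⟩ := hx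
    have hc : c + 1 ≤ n := by
      by_contra! hnc
      obtain rfl : c = n := by
        by_contra! hcn
        have := Nat.mul_le_mul_left p (show n + 1 ≤ c by omega)
        rw [Nat.mul_succ] at this
        omega
      exact hne (Prod.ext rfl (by simp at hxy ⊢; omega))
    have := Nat.mul_le_mul_left p hc
    rw [Nat.mul_succ] at this
    rw [coeff_eq_zero_of_natDegree_lt (hg.trans_le (by omega)), mul_zero]
  · rw [coeff_expand hp, if_neg hx, zero_mul]

end CentralTrinomial

theorem cast_centralTrinomial_mul_add {p : ℕ} [Fact p.Prime] (n : ℕ) {r : ℕ} (hr : r < p) :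
    (centralTrinomial (p * n + r) : ZMod p) = centralTrinomial r * centralTrinomial n := by
  have hdeg : ((1 + X + X ^ 2 : (ZMod p)[X]) ^ r).natDegree < p + r := by
    have h : (1 + X + X ^ 2 : (ZMod p)[X]).natDegree ≤ 2 := by compute_degree
    exact natDegree_pow_le.trans_lt (by nlinarith)
  rw [← coeff_one_add_X_add_X_sq_pow, ← coeff_one_add_X_add_X_sq_pow,
    ← coeff_one_add_X_add_X_sq_pow, pow_add, pow_mul, ← ZMod.expand_card, ← map_pow,
    coeff_expand_mul_of_natDegree_lt (Fact.out : p.Prime).pos _ _ _ hr hdeg, mul_comm]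

theorem cast_centralTrinomial_ne_zero {p : ℕ} [Fact p.Prime]
    (hp : ∀ r < p, (centralTrinomial r : ZMod p) ≠ 0) (n : ℕ) :
    (centralTrinomial n : ZMod p) ≠ 0 := by
  induction n using Nat.strong_induction_on with
  | _ n ih =>
    have hp₁ := (Fact.out : p.Prime).one_lt
    by_cases hn : n < p
    · exact hp n hn
    · rw [← Nat.div_add_mod n p, cast_centralTrinomial_mul_add _ (Nat.mod_lt _ (by omega))]
      exact mul_ne_zero (hp _ (Nat.mod_lt _ (by omega))) (ih _ (Nat.div_lt_self (by omega) hp₁))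

theorem two_mul_catalan_add_centralBinom_succ (k : ℕ) :
    2 * catalan k + (k + 1).centralBinom = 4 * k.centralBinom := by
  refine Nat.eq_of_mul_eq_mul_left (show 0 < k + 1 by omega) ?_
  rw [mul_add, Nat.succ_mul_centralBinom_succ, mul_left_comm, succ_mul_catalan_eq_centralBinom]
  ring

/-- The factor `x i, …, x (i + n + p - 1)` has period `p`; a cube of period `p` is the case
`n = 2 * p`. -/
def HasPeriodOn {α : Type*} (x : ℕ → α) (p i n : ℕ) : Prop :=
  ∀ t < n, x (i + t) = x (i + t + p)

theorem HasPeriodOn.eq_add_period {α : Type*} {x : ℕ → α} {p i n s : ℕ}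
    (h : HasPeriodOn x p i n) (his : i ≤ s) (hsn : s < i + n) : x s = x (s + p) := by
  simpa [Nat.add_sub_cancel' his] using h (s - i) (by omega)

section ModFive

instance fact_prime_five : Fact (Nat.Prime 5) := ⟨by norm_num⟩

local notation "τ" n:max => ((centralTrinomial n : ℕ) : ZMod 5)
local notation "μ" n:max => ((motzkin n : ℕ) : ZMod 5)

theorem cast_catalan_mod_five (k : ℕ) :
    (catalan k : ZMod 5) = 2 * k.centralBinom + 2 * (k + 1).centralBinom := by
  have h := congrArg (Nat.cast : ℕ → ZMod 5) (two_mul_catalan_add_centralBinom_succ k)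
  push_cast at h
  linear_combination (norm := (ring_nf; reduce_mod_char)) 3 * h

theorem cast_motzkin_mod_five (n : ℕ) : μ n = 4 * τ n + τ (n + 1) + 2 * τ (n + 2) := by
  have h := evenChooseSum_add_two (fun k ↦ (k.centralBinom : ZMod 5)) n
  simp only [centralTrinomial, motzkin_eq_evenChooseSum, Nat.cast_evenChooseSum]
  simp only [cast_catalan_mod_five, evenChooseSum_mul_add_mul]
  linear_combination (norm := (ring_nf; reduce_mod_char)) (-2) * h

theorem cast_centralTrinomial_five_mul_add (m : ℕ) {r : ℕ} (hr : r < 5) :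
    τ (5 * m + r) = τ r * τ m :=
  cast_centralTrinomial_mul_add m hr

theorem cast_centralTrinomial_mod_five_ne_zero (n : ℕ) : τ n ≠ 0 :=
  cast_centralTrinomial_ne_zero (by decide) n

theorem cast_centralTrinomial_succ_mul (n : ℕ) (hn : n % 5 < 4) :
    τ (n + 1) * τ (n % 5) = τ (n % 5 + 1) * τ n := by
  obtain ⟨m, r, hr, rfl⟩ : ∃ m r, r < 4 ∧ n = 5 * m + r :=
    ⟨n / 5, n % 5, hn, (Nat.div_add_mod n 5).symm⟩
  rw [show (5 * m + r) % 5 = r by omega, add_assoc,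
    cast_centralTrinomial_five_mul_add m (by omega : r + 1 < 5),
    cast_centralTrinomial_five_mul_add m (by omega : r < 5)]
  ring

theorem mod_five_eq_zero_of_centralTrinomial_succ_eq {n : ℕ} (hn : n % 5 < 4)
    (h : τ (n + 1) = τ n) : n % 5 = 0 := by
  have key := cast_centralTrinomial_succ_mul n hn
  rw [h, mul_comm, mul_left_inj' (cast_centralTrinomial_mod_five_ne_zero n)] at key
  have : ∀ r < 4, τ r = τ (r + 1) → r = 0 := by decide
  exact this _ hn key

theorem mod_five_eq_of_centralTrinomial_eq {n n' : ℕ} (hn : n % 5 < 4) (hn' : n' % 5 < 4)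
    (h₀ : τ n = τ n') (h₁ : τ (n + 1) = τ (n' + 1)) : n % 5 = n' % 5 := by
  have e := cast_centralTrinomial_succ_mul n hn
  have e' := cast_centralTrinomial_succ_mul n' hn'
  rw [← h₀, ← h₁] at e'
  have key : τ (n % 5 + 1) * τ (n' % 5) * τ n = τ (n' % 5 + 1) * τ (n % 5) * τ n := by
    linear_combination τ (n % 5) * e' - τ (n' % 5) * e
  have : ∀ r < 4, ∀ s < 4, τ (r + 1) * τ s = τ (s + 1) * τ r → r = s := by decide
  exact this _ hn _ hn' (mul_right_cancel₀ (cast_centralTrinomial_mod_five_ne_zero n) key)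

theorem centralTrinomial_mod_five_not_hasPeriodOn (q : ℕ) (hq : 0 < q) (j : ℕ) :
    ¬ HasPeriodOn (fun n ↦ τ n) q j (2 * q + 1) := by
  induction q using Nat.strong_induction_on generalizing j with
  | _ q ih =>
    intro h
    have hτ : ∀ n, j ≤ n → n ≤ j + 2 * q → τ n = τ (n + q) := fun n h₁ h₂ ↦
      h.eq_add_period h₁ (by omega)
    by_cases h5 : 5 ∣ q
    · obtain ⟨q', rfl⟩ := h5
      refine ih q' (by omega) (by omega) (j / 5) fun d hd ↦ ?_
      have e := hτ (5 * (j / 5 + d) + j % 5) (by omega) (by omega)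
      rw [show 5 * (j / 5 + d) + j % 5 + 5 * q' = 5 * (j / 5 + d + q') + j % 5 by ring,
        cast_centralTrinomial_five_mul_add _ (Nat.mod_lt _ (by norm_num)),
        cast_centralTrinomial_five_mul_add _ (Nat.mod_lt _ (by norm_num))] at e
      exact mul_left_cancel₀ (cast_centralTrinomial_mod_five_ne_zero _) e
    obtain rfl | hq₂ : q = 1 ∨ 2 ≤ q := by omega
    · have hres : ∀ n, j ≤ n → n ≤ j + 2 → n % 5 = 0 ∨ n % 5 = 4 := by
        intro n h₁ h₂
        by_cases hn : n % 5 < 4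
        · exact Or.inl (mod_five_eq_zero_of_centralTrinomial_succ_eq hn (hτ n h₁ h₂).symm)
        · omega
      have := hres j le_rfl (by omega)
      have := hres (j + 1) (by omega) (by omega)
      have := hres (j + 2) (by omega) le_rfl
      omega
    · have hbad : ∀ d ≤ 3, (j + d) % 5 = 4 ∨ (j + d + q) % 5 = 4 := by
        intro d hd
        by_contra! hne
        have := mod_five_eq_of_centralTrinomial_eq (by omega) (by omega)
          (hτ (j + d) (by omega) (by omega))
          (by rw [hτ (j + d + 1) (by omega) (by omega)]; ring_nf)
        omega
      have := hbad 0 (by norm_num)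
      have := hbad 1 (by norm_num)
      have := hbad 2 (by norm_num)
      have := hbad 3 le_rfl
      omega

theorem cast_motzkin_five_mul (m : ℕ) : μ (5 * m) = τ m := by
  rw [cast_motzkin_mod_five, cast_centralTrinomial_five_mul_add m (by norm_num : 1 < 5),
    cast_centralTrinomial_five_mul_add m (by norm_num : 2 < 5), ← add_zero (5 * m),
    cast_centralTrinomial_five_mul_add m (by norm_num : 0 < 5)]
  have : 4 * τ 0 + τ 1 + 2 * τ 2 = 1 := by decide
  linear_combination τ m * this

theorem cast_motzkin_five_mul_add_one (m : ℕ) : μ (5 * m + 1) = τ m := by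
  rw [cast_motzkin_mod_five, cast_centralTrinomial_five_mul_add m (by norm_num : 1 < 5),
    cast_centralTrinomial_five_mul_add m (by norm_num : 2 < 5),
    cast_centralTrinomial_five_mul_add m (by norm_num : 3 < 5)]
  have : 4 * τ 1 + τ 2 + 2 * τ 3 = 1 := by decide
  linear_combination τ m * this

theorem cast_motzkin_five_mul_add_two (m : ℕ) : μ (5 * m + 2) = 2 * τ m := by
  rw [cast_motzkin_mod_five, cast_centralTrinomial_five_mul_add m (by norm_num : 2 < 5),
    cast_centralTrinomial_five_mul_add m (by norm_num : 3 < 5),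
    cast_centralTrinomial_five_mul_add m (by norm_num : 4 < 5)]
  have : 4 * τ 2 + τ 3 + 2 * τ 4 = 2 := by decide
  linear_combination τ m * this

theorem cast_motzkin_five_mul_add_three (m : ℕ) :
    μ (5 * m + 3) = 2 * τ m + 2 * τ (m + 1) := by
  rw [cast_motzkin_mod_five, show 5 * m + 3 + 2 = 5 * (m + 1) + 0 by ring,
    cast_centralTrinomial_five_mul_add m (by norm_num : 3 < 5),
    cast_centralTrinomial_five_mul_add m (by norm_num : 4 < 5),
    cast_centralTrinomial_five_mul_add (m + 1) (by norm_num : 0 < 5)]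
  have h₁ : 4 * τ 3 + τ 4 = 2 := by decide
  have h₂ : 2 * τ 0 = 2 := by decide
  linear_combination τ m * h₁ + τ (m + 1) * h₂

theorem cast_motzkin_five_mul_add_four (m : ℕ) : μ (5 * m + 4) = τ m + 3 * τ (m + 1) := by
  rw [cast_motzkin_mod_five, show 5 * m + 4 + 1 = 5 * (m + 1) + 0 by ring,
    show 5 * m + 4 + 2 = 5 * (m + 1) + 1 by ring,
    cast_centralTrinomial_five_mul_add m (by norm_num : 4 < 5),
    cast_centralTrinomial_five_mul_add (m + 1) (by norm_num : 0 < 5),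
    cast_centralTrinomial_five_mul_add (m + 1) (by norm_num : 1 < 5)]
  have h₁ : 4 * τ 4 = 1 := by decide
  have h₂ : τ 0 + 2 * τ 1 = 3 := by decide
  linear_combination τ m * h₁ + τ (m + 1) * h₂

theorem cast_motzkin_succ_ne_self {n : ℕ} (hn : n % 5 = 1 ∨ n % 5 = 2) : μ (n + 1) ≠ μ n := by
  obtain ⟨m, rfl | rfl⟩ : ∃ m, n = 5 * m + 1 ∨ n = 5 * m + 2 := ⟨n / 5, by omega⟩
  · rw [cast_motzkin_five_mul_add_one, cast_motzkin_five_mul_add_two]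
    intro h
    exact cast_centralTrinomial_mod_five_ne_zero m (by linear_combination h)
  · rw [cast_motzkin_five_mul_add_two, cast_motzkin_five_mul_add_three]
    intro h
    exact cast_centralTrinomial_mod_five_ne_zero (m + 1)
      (by linear_combination (norm := (ring_nf; reduce_mod_char)) 3 * h)

theorem cast_motzkin_succ_ne_two_mul {n : ℕ} (hn : n % 5 = 4 ∨ n % 5 = 0) :
    μ (n + 1) ≠ 2 * μ n := by
  obtain ⟨m, rfl | rfl⟩ : ∃ m, n = 5 * m + 4 ∨ n = 5 * m := ⟨n / 5, by omega⟩
  · rw [show 5 * m + 4 + 1 = 5 * (m + 1) by ring, cast_motzkin_five_mul,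
      cast_motzkin_five_mul_add_four]
    intro h
    exact cast_centralTrinomial_mod_five_ne_zero m
      (by linear_combination (norm := (ring_nf; reduce_mod_char)) 2 * h)
  · rw [cast_motzkin_five_mul_add_one, cast_motzkin_five_mul]
    intro h
    exact cast_centralTrinomial_mod_five_ne_zero m (by linear_combination -h)

theorem motzkin_mod_five_not_hasPeriodOn_two (i : ℕ) :
    ¬ HasPeriodOn (fun n ↦ μ n) 2 i (2 * 2) := by
  intro h
  by_cases hi : i % 5 = 1
  · obtain ⟨m, rfl⟩ : ∃ m, i = 5 * m + 1 := ⟨i / 5, by omega⟩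
    have e₁ : μ (5 * m + 1) = μ (5 * m + 3) := h.eq_add_period le_rfl (by omega)
    have e₂ : μ (5 * m + 3) = μ (5 * (m + 1)) := h.eq_add_period (by omega) (by omega)
    rw [cast_motzkin_five_mul_add_one, cast_motzkin_five_mul_add_three] at e₁
    rw [cast_motzkin_five_mul_add_three, cast_motzkin_five_mul] at e₂
    exact cast_centralTrinomial_mod_five_ne_zero (m + 1)
      (by linear_combination (norm := (ring_nf; reduce_mod_char)) e₁ + 3 * e₂)
  · set m := (i + 4) / 5
    have e : μ (5 * m) = μ (5 * m + 2) := h.eq_add_period (by omega) (by omega)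
    rw [cast_motzkin_five_mul, cast_motzkin_five_mul_add_two] at e
    exact cast_centralTrinomial_mod_five_ne_zero m (by linear_combination -e)

theorem motzkin_mod_five_not_hasPeriodOn_of_not_dvd {p : ℕ} (hp : 3 ≤ p) (h5 : ¬ 5 ∣ p)
    (i : ℕ) : ¬ HasPeriodOn (fun n ↦ μ n) p i (2 * p) := by
  intro h
  have hμ : ∀ n, i ≤ n → n < i + 5 → μ (n + p + 1) = μ (n + 1) ∧ μ (n + p) = μ n :=
    fun n h₁ h₂ ↦ ⟨by rw [add_right_comm]; exact (h.eq_add_period (by omega) (by omega)).symm,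
      (h.eq_add_period h₁ (by omega)).symm⟩
  by_cases hp₁₂ : p % 5 = 1 ∨ p % 5 = 2
  · set m := (i + 4) / 5
    obtain ⟨e₁, e₀⟩ := hμ (5 * m) (by omega) (by omega)
    refine cast_motzkin_succ_ne_self (n := 5 * m + p) (by omega) ?_
    rw [e₁, e₀, cast_motzkin_five_mul_add_one, cast_motzkin_five_mul]
  · set m := (i + 3) / 5
    obtain ⟨e₁, e₀⟩ := hμ (5 * m + 1) (by omega) (by omega)
    refine cast_motzkin_succ_ne_two_mul (n := 5 * m + 1 + p) (by omega) ?_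
    rw [e₁, e₀, cast_motzkin_five_mul_add_two, cast_motzkin_five_mul_add_one]

theorem HasPeriodOn.centralTrinomial_of_motzkin {q i : ℕ} (hq : 0 < q)
    (h : HasPeriodOn (fun n ↦ μ n) (5 * q) i (2 * (5 * q))) :
    HasPeriodOn (fun n ↦ τ n) q (i / 5) (2 * q + 1) := by
  set u := i / 5
  have hμ : ∀ s, i ≤ s → s < i + 10 * q → μ s = μ (s + 5 * q) := fun s h₁ h₂ ↦
    h.eq_add_period h₁ (by omega)
  have hblock : ∀ m, i ≤ 5 * m → 5 * m < i + 10 * q → τ m = τ (m + q) := by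
    intro m h₁ h₂
    rw [← cast_motzkin_five_mul, hμ _ h₁ h₂, ← mul_add, cast_motzkin_five_mul]
  intro d hd
  show τ (u + d) = τ (u + d + q)
  by_cases hin : i ≤ 5 * (u + d) ∧ 5 * (u + d) < i + 10 * q
  · exact hblock _ hin.1 hin.2
  by_cases hi : i % 5 = 0
  · -- `5 (u + 2q)` is past the window, so read `T (u + 2q)` off the position `5 (u + 2q) - 2`
    obtain rfl : d = 2 * q := by omega
    have e := hμ (5 * (u + 2 * q - 1) + 3) (by omega) (by omega)
    rw [show 5 * (u + 2 * q - 1) + 3 + 5 * q = 5 * (u + 2 * q - 1 + q) + 3 by omega,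
      cast_motzkin_five_mul_add_three, cast_motzkin_five_mul_add_three,
      hblock (u + 2 * q - 1) (by omega) (by omega), show u + 2 * q - 1 + 1 = u + 2 * q by omega,
      show u + 2 * q - 1 + q + 1 = u + 2 * q + q by omega] at e
    exact mul_left_cancel₀ (by decide) (add_left_cancel e)
  · -- `5 u` is before the window, so read `T u` off the position `5 u + 4`
    obtain rfl : d = 0 := by omega
    have e := hμ (5 * u + 4) (by omega) (by omega)
    rw [show 5 * u + 4 + 5 * q = 5 * (u + q) + 4 by ring, cast_motzkin_five_mul_add_four,
      cast_motzkin_five_mul_add_four, hblock (u + 1) (by omega) (by omega),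
      show u + 1 + q = u + q + 1 by ring] at e
    simpa using add_right_cancel e

theorem motzkin_mod_five_period_eq_one {p i : ℕ} (hp : 0 < p)
    (h : HasPeriodOn (fun n ↦ μ n) p i (2 * p)) : p = 1 := by
  by_contra hp₁
  by_cases h5 : 5 ∣ p
  · obtain ⟨q, rfl⟩ := h5
    exact centralTrinomial_mod_five_not_hasPeriodOn q (by omega) _
      (h.centralTrinomial_of_motzkin (by omega))
  obtain rfl | hp₃ : p = 2 ∨ 3 ≤ p := by omega
  · exact motzkin_mod_five_not_hasPeriodOn_two i h
  · exact motzkin_mod_five_not_hasPeriodOn_of_not_dvd hp₃ h5 i h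

theorem cast_motzkin_eq_of_centralTrinomial_eq {m : ℕ} (h : τ m = 3 * τ (m + 1)) {t : ℕ}
    (ht : t < 3) : μ (5 * m + 4 + t) = τ (m + 1) := by
  interval_cases t
  · rw [add_zero, cast_motzkin_five_mul_add_four, h]
    ring_nf
    reduce_mod_char
  · rw [show 5 * m + 4 + 1 = 5 * (m + 1) by ring, cast_motzkin_five_mul]
  · rw [show 5 * m + 4 + 2 = 5 * (m + 1) + 1 by ring, cast_motzkin_five_mul_add_one]

theorem exists_motzkin_mod_five_cube {r : ℕ} (hr₁ : 1 ≤ r) (hr₄ : r ≤ 4) :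
    ∃ i, ∀ t < 3, μ (i + t) = r := by
  obtain ⟨m, hm, hr⟩ : ∃ m, τ m = 3 * τ (m + 1) ∧ τ (m + 1) = r := by
    interval_cases r
    exacts [⟨23, by decide, by decide⟩, ⟨13, by decide, by decide⟩, ⟨9, by decide, by decide⟩,
      ⟨3, by decide, by decide⟩]
  exact ⟨5 * m + 4, fun t ht ↦ (cast_motzkin_eq_of_centralTrinomial_eq hm ht).trans hr⟩

end ModFive

theorem motzkin_mod_five_cubes :
    (∀ i p : ℕ, 1 ≤ p →
      (∀ t < 2 * p, motzkin (i + t) % 5 = motzkin (i + t + p) % 5) → p = 1) ∧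
    (∀ r : ℕ, 1 ≤ r → r ≤ 4 → ∃ i, ∀ t < 3, motzkin (i + t) % 5 = r) := by
  refine ⟨fun i p hp h ↦ motzkin_mod_five_period_eq_one hp fun t ht ↦
    (ZMod.natCast_eq_natCast_iff' _ _ 5).2 (h t ht), fun r hr₁ hr₄ ↦ ?_⟩
  obtain ⟨i, hi⟩ := exists_motzkin_mod_five_cube hr₁ hr₄
  refine ⟨i, fun t ht ↦ ?_⟩
  rw [← ZMod.val_natCast, hi t ht, ZMod.val_natCast, Nat.mod_eq_of_lt (by omega)]
end

section
/- For all n ≥ 0, T_n ≡ 1 (mod 3) if every digit in the base-3 representation of n lies in {0,1}, and T_n ≡ 0 (mod 3) otherwise. -/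
/-!
Over `ZMod p`, Frobenius gives `Q ^ (p * m + r) = expand p (Q ^ m) * Q ^ r` for `Q = 1 + X + X ^ 2`.
As `Q ^ r` has degree `2 * r < p + r` when `r < p`, the coefficient of `X ^ (p * m + r)` on the right
is just `T_m * T_r`. Hence `T_n` is congruent mod `p` to the product of `T_d` over the base-`p`
digits `d` of `n`, and for `p = 3` we have `T_0 = T_1 = 1` and `T_2 = 3 ≡ 0`.
-/

def trinomial (n : ℕ) : ℕ :=
  ∑ k ∈ Finset.range (n + 1), n.choose (2 * k) * (2 * k).choose k

namespace Polynomial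

theorem coeff_expand_mul_of_natDegree_lt {R : Type*} [CommSemiring R] {p m r : ℕ}
    (A B : R[X]) (hr : r < p) (hB : B.natDegree < p + r) :
    (expand R p A * B).coeff (p * m + r) = A.coeff m * B.coeff r := by
  have hp : 0 < p := by omega
  rw [coeff_mul, Finset.sum_eq_single (p * m, r)]
  · rw [coeff_expand hp, if_pos (dvd_mul_right p m), Nat.mul_div_cancel_left m hp]
  · rintro ⟨i, k⟩ hik hne
    rw [Finset.HasAntidiagonal.mem_antidiagonal] at hik
    dsimp only at hik ⊢
    rw [coeff_expand hp]
    split_ifs with hdvd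
    · obtain ⟨j, rfl⟩ := hdvd
      have hjm : j < m := by
        by_contra! hmj
        rcases hmj.eq_or_lt with rfl | hmj
        · exact hne (by simp only [Prod.mk.injEq, true_and]; omega)
        · have := Nat.mul_le_mul_left p hmj
          rw [Nat.mul_succ] at this
          omega
      have := Nat.mul_le_mul_left p hjm
      rw [Nat.mul_succ] at this
      rw [coeff_eq_zero_of_natDegree_lt (p := B) (by omega), mul_zero]
    · rw [zero_mul]
  · simp

theorem coeff_pow_mul_add_eq_mul_of_natDegree_le_two {p : ℕ} [Fact p.Prime]
    (Q : (ZMod p)[X]) (hQ : Q.natDegree ≤ 2) (m : ℕ) {r : ℕ} (hr : r < p) :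
    (Q ^ (p * m + r)).coeff (p * m + r) = (Q ^ m).coeff m * (Q ^ r).coeff r := by
  have hdeg : (Q ^ r).natDegree < p + r :=
    (natDegree_pow_le.trans (Nat.mul_le_mul_left r hQ)).trans_lt (by omega)
  rw [pow_add, pow_mul', ← ZMod.expand_card, coeff_expand_mul_of_natDegree_lt _ _ hr hdeg]

end Polynomial

theorem Nat.eq_prod_map_digits {M : Type*} [CommMonoid M] {b : ℕ} (hb : 1 < b) (a : ℕ → M)
    (h0 : a 0 = 1) (hmul : ∀ m r, r < b → a (b * m + r) = a m * a r) (n : ℕ) :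
    a n = ((b.digits n).map a).prod := by
  induction n using Nat.strong_induction_on with
  | _ n ih =>
    rcases n.eq_zero_or_pos with rfl | hn
    · simp [h0]
    · rw [Nat.digits_def' hb hn, List.map_cons, List.prod_cons, ← ih _ (Nat.div_lt_self hn hb),
        mul_comm, ← hmul _ _ (Nat.mod_lt n (by omega)), Nat.div_add_mod]

section

open Polynomial

theorem coeff_one_add_X_add_X_sq_pow_self (R : Type*) [CommSemiring R] (n : ℕ) :
    ((1 + X + X ^ 2 : R[X]) ^ n).coeff n = trinomial n := by
  rw [add_comm, add_pow, finsetSum_coeff, _root_.trinomial, Nat.cast_sum]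
  refine Finset.sum_congr rfl fun k _ ↦ ?_
  rw [← pow_mul, ← C_eq_natCast, coeff_mul_C, mul_comm (X ^ (2 * k)), coeff_mul_X_pow',
    coeff_one_add_X_pow]
  split_ifs with hk
  · have hsymm : (n - k).choose (n - 2 * k) = (n - k).choose k := by
      rw [show n - 2 * k = n - k - k by omega, Nat.choose_symm (by omega)]
    have hchoose : n.choose (2 * k) * (2 * k).choose k = n.choose k * (n - k).choose k := by
      rw [Nat.choose_mul (by omega), show 2 * k - k = k by omega]
    rw [hsymm, hchoose]
    push_cast
    ring
  · rw [Nat.choose_eq_zero_of_lt (by omega : n < 2 * k)]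
    simp

theorem cast_trinomial_mul_add {p : ℕ} [Fact p.Prime] (m : ℕ) {r : ℕ} (hr : r < p) :
    (trinomial (p * m + r) : ZMod p) = trinomial m * trinomial r := by
  simp only [← coeff_one_add_X_add_X_sq_pow_self]
  exact coeff_pow_mul_add_eq_mul_of_natDegree_le_two _ (by compute_degree!) m hr

end

theorem cast_trinomial_eq_prod_map_digits (p : ℕ) [hp : Fact p.Prime] (n : ℕ) :
    (trinomial n : ZMod p) = ((p.digits n).map fun d ↦ (trinomial d : ZMod p)).prod :=
  Nat.eq_prod_map_digits hp.out.one_lt (fun n ↦ (trinomial n : ZMod p)) (by simp [trinomial])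
    (fun m _ hr ↦ cast_trinomial_mul_add m hr) n

theorem trinomial_mod_three (n : ℕ) :
    ((∀ d ∈ Nat.digits 3 n, d ≤ 1) → trinomial n % 3 = 1) ∧
    (¬(∀ d ∈ Nat.digits 3 n, d ≤ 1) → trinomial n % 3 = 0) := by
  rw [← ZMod.val_natCast 3 (trinomial n), cast_trinomial_eq_prod_map_digits]
  constructor
  · intro hdigits
    rw [List.prod_eq_one]
    · rfl
    · simp only [List.mem_map]
      rintro _ ⟨d, hd, rfl⟩
      have := hdigits d hd
      interval_cases d <;> decide
  · intro hdigits
    push Not at hdigits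
    obtain ⟨d, hd, hd1⟩ := hdigits
    obtain rfl : d = 2 := by have := Nat.digits_lt_base (by norm_num) hd; omega
    rw [List.prod_eq_zero (List.mem_map.2 ⟨2, hd, by decide⟩)]
    rfl
end

section
/- For every n ≥ 0, the central trinomial coefficient T_n is not divisible by 5. -/
/-!
`T n` is the coefficient of `X ^ n` in `f ^ n` for `f = 1 + X + X ^ 2`. Over `ZMod p` one has
`f ^ p = expand p f`, and since `deg f ≤ 2` this gives the Lucas-type factorisation
`[X^(pq+r)] f^(pq+r) = [X^q] f^q * [X^r] f^r` for `r < p`. So the central coefficients never vanish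
mod `p` once the first `p` of them do not; for `p = 5` these are `1, 1, 3, 7, 19`.
-/

open Finset
open Polynomial hiding trinomial

theorem Finset.sum_range_eq_sum_range_two_mul {M : Type*} [AddCommMonoid M] {g : ℕ → M} {n : ℕ}
    (hodd : ∀ j, Odd j → g j = 0) (hlarge : ∀ j, n < j → g j = 0) :
    ∑ j ∈ range (n + 1), g j = ∑ k ∈ range (n + 1), g (2 * k) := by
  have hext : ∑ j ∈ range (n + 1), g j = ∑ j ∈ range (2 * n + 1), g j :=
    sum_subset (range_subset_range.2 (by omega)) fun j hj hjn ↦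
      hlarge j (by simp only [mem_range] at hj hjn; omega)
  rw [hext]
  refine (sum_of_injOn (2 * ·) (fun a _ b _ h ↦ by simpa using h) ?_ ?_ fun _ _ ↦ rfl).symm
  · intro k hk
    simp only [coe_range, Set.mem_Iio] at hk ⊢
    omega
  · intro j _ hj
    rcases Nat.even_or_odd j with ⟨k, hk⟩ | hj_odd
    · refine hlarge j (not_le.1 fun hjn ↦ hj ⟨k, ?_, by simp only; omega⟩)
      simp only [coe_range, Set.mem_Iio]
      omega
    · exact hodd j hj_odd

theorem Polynomial.coeff_one_add_X_sq_pow {R : Type*} [CommSemiring R] (j i : ℕ) :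
    ((1 + X ^ 2 : R[X]) ^ j).coeff i = if 2 ∣ i then (j.choose (i / 2) : R) else 0 := by
  have hexpand : (1 + X ^ 2 : R[X]) = expand R 2 (1 + X) := by simp
  rw [hexpand, ← map_pow, coeff_expand two_pos, coeff_one_add_X_pow]

theorem trinomial_eq_coeff (R : Type*) [CommSemiring R] (n : ℕ) :
    (trinomial n : R) = ((1 + X + X ^ 2 : R[X]) ^ n).coeff n := by
  have hterm : ∀ j ∈ range (n + 1),
      ((1 + X ^ 2 : R[X]) ^ j * X ^ (n - j) * (n.choose j : R[X])).coeff n =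
        n.choose j * ((1 + X ^ 2 : R[X]) ^ j).coeff j := by
    intro j hj
    have hjn : j ≤ n := Nat.lt_succ_iff.1 (mem_range.1 hj)
    rw [coeff_mul_natCast, coeff_mul_X_pow', if_pos (Nat.sub_le n j), Nat.sub_sub_self hjn,
      mul_comm]
  rw [show (1 + X + X ^ 2 : R[X]) = (1 + X ^ 2) + X by ring, add_pow, finsetSum_coeff,
    sum_congr rfl hterm, sum_range_eq_sum_range_two_mul]
  · simp [trinomial, coeff_one_add_X_sq_pow]
  · intro j hj
    simp [coeff_one_add_X_sq_pow, Nat.not_even_iff_odd.2 hj, ← even_iff_two_dvd]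
  · intro j hj
    simp [Nat.choose_eq_zero_of_lt hj]

theorem Polynomial.coeff_expand_mul_of_natDegree_lt_s7 {R : Type*} [CommSemiring R] {p : ℕ}
    (g h : R[X]) {i r : ℕ} (hr : r < p) (hh : h.natDegree < p + r) :
    (expand R p g * h).coeff (p * i + r) = g.coeff i * h.coeff r := by
  have hp : 0 < p := by omega
  rw [coeff_mul, sum_eq_single_of_mem (p * i, r) (by simp)]
  · rw [coeff_expand hp, if_pos (dvd_mul_right p i), Nat.mul_div_cancel_left i hp]
  rintro ⟨a, b⟩ hab hne
  rw [HasAntidiagonal.mem_antidiagonal] at hab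
  dsimp only at hab ⊢
  rw [coeff_expand hp]
  split_ifs with hpa
  · obtain ⟨m, rfl⟩ := hpa
    rcases lt_trichotomy m i with hmi | rfl | him
    · have : p * m + p ≤ p * i := by simpa [mul_add] using Nat.mul_le_mul_left p hmi
      rw [coeff_eq_zero_of_natDegree_lt (p := h) (by omega), mul_zero]
    · exact absurd (by rw [show b = r by omega]) hne
    · have : p * i + p ≤ p * m := by simpa [mul_add] using Nat.mul_le_mul_left p him
      omega
  · rw [zero_mul]

section ZMod

variable {p : ℕ} [Fact p.Prime] {f : (ZMod p)[X]}

theorem coeff_pow_mul_add_of_natDegree_le_two (hf : f.natDegree ≤ 2) (q : ℕ) {r : ℕ}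
    (hr : r < p) : (f ^ (p * q + r)).coeff (p * q + r) = (f ^ q).coeff q * (f ^ r).coeff r := by
  rw [pow_add, pow_mul, ← ZMod.expand_card, ← map_pow]
  refine coeff_expand_mul_of_natDegree_lt_s7 _ _ hr (natDegree_pow_le.trans_lt ?_)
  nlinarith

theorem coeff_pow_self_ne_zero_of_natDegree_le_two (hf : f.natDegree ≤ 2)
    (hsmall : ∀ r < p, (f ^ r).coeff r ≠ 0) (n : ℕ) : (f ^ n).coeff n ≠ 0 := by
  have hp : p.Prime := Fact.out
  induction n using Nat.strong_induction_on with
  | _ n ih =>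
    rcases Nat.eq_zero_or_pos n with rfl | hn
    · exact hsmall 0 hp.pos
    rw [← Nat.div_add_mod n p, coeff_pow_mul_add_of_natDegree_le_two hf _ (Nat.mod_lt n hp.pos)]
    exact mul_ne_zero (ih _ (Nat.div_lt_self hn hp.one_lt)) (hsmall _ (Nat.mod_lt n hp.pos))

end ZMod

theorem trinomial_not_div_five (n : ℕ) : ¬ (5 ∣ trinomial n) := by
  have hsmall : ∀ r < 5, (trinomial r : ZMod 5) ≠ 0 := by decide
  have : Fact (Nat.Prime 5) := ⟨Nat.prime_five⟩
  have hdeg : (1 + X + X ^ 2 : (ZMod 5)[X]).natDegree ≤ 2 := by compute_degree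
  rw [← ZMod.natCast_eq_zero_iff, trinomial_eq_coeff]
  exact coeff_pow_self_ne_zero_of_natDegree_le_two hdeg
    (fun r hr ↦ trinomial_eq_coeff (ZMod 5) r ▸ hsmall r hr) n
end

section
/- Let f : Σ* → Σ* be a morphism on a finite alphabet Σ that is primitive (there exists t such that for all a, b ∈ Σ, the letter b occurs in f^t(a)) and prolongable on a letter a (f(a) begins with a and |f^n(a)| → ∞). Then the fixed point f^ω(a) is uniformly recurrent: for every factor w of f^ω(a) there is a constant C such that every factor of f^ω(a) of length C contains an occurrence of w. -/
/-- Extension of a morphism (given on letters) to words. -/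
def mapWord {α : Type*} (f : α → List α) (w : List α) : List α :=
  (w.map f).flatten

/-!
Let `F = mapWord f`, choose `n` with `F^n(a)` longer than `i₀ + m`, and let `N = n + t`. By
primitivity every block `F^N(b)` contains `F^n(a)`, a prefix of `x` that contains the factor at
`i₀`. As a fixed point of `F^N`, `x` is the concatenation of the blocks `F^N(x k)`, each of length
between `1` and `L = max_b |F^N(b)|`, so every window of length `2L` contains a whole block.
-/

section

variable {α : Type*}

section mapWord

variable (f : α → List α)

@[simp]
lemma mapWord_nil : mapWord f [] = [] := rfl

@[simp]
lemma mapWord_append (u v : List α) : mapWord f (u ++ v) = mapWord f u ++ mapWord f v := by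
  simp [mapWord]

@[simp]
lemma mapWord_singleton (b : α) : mapWord f [b] = f b := by
  simp [mapWord]

lemma iterate_mapWord_append (n : ℕ) (u v : List α) :
    (mapWord f)^[n] (u ++ v) = (mapWord f)^[n] u ++ (mapWord f)^[n] v := by
  induction n generalizing u v with
  | zero => rfl
  | succ n ih => simp only [Function.iterate_succ_apply, mapWord_append, ih]

lemma iterate_mapWord_eq_mapWord (n : ℕ) (w : List α) :
    (mapWord f)^[n] w = mapWord (fun b => (mapWord f)^[n] [b]) w := by
  induction w with
  | nil => exact Function.iterate_fixed rfl n
  | cons b w ih =>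
    rw [← List.singleton_append, iterate_mapWord_append, ih, mapWord_append, mapWord_singleton]

variable {f}

protected lemma List.IsPrefix.iterate_mapWord {u v : List α} (h : u <+: v) (n : ℕ) :
    (mapWord f)^[n] u <+: (mapWord f)^[n] v := by
  rw [iterate_mapWord_eq_mapWord, iterate_mapWord_eq_mapWord]
  exact h.flatMap _

protected lemma List.IsInfix.iterate_mapWord {u v : List α} (h : u <:+: v) (n : ℕ) :
    (mapWord f)^[n] u <:+: (mapWord f)^[n] v := by
  rw [iterate_mapWord_eq_mapWord, iterate_mapWord_eq_mapWord]
  exact h.flatMap _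

lemma iterate_mapWord_infix_of_mem {a b : α} {t : ℕ} (h : a ∈ (mapWord f)^[t] [b]) (n : ℕ) :
    (mapWord f)^[n] [a] <:+: (mapWord f)^[n + t] [b] := by
  rw [Function.iterate_add_apply]
  exact ((List.singleton_infix_iff _ _).2 h).iterate_mapWord n

end mapWord

def OccursAt (x : Stream' α) (w : List α) (j : ℕ) : Prop :=
  (x.drop j).take w.length = w

section OccursAt

variable {x : Stream' α} {u v w : List α} {j : ℕ}

lemma occursAt_iff_forall_getElem :
    OccursAt x w j ↔ ∀ t (ht : t < w.length), x.get (j + t) = w[t] := by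
  simp [OccursAt, List.ext_getElem_iff, Stream'.get_drop]

lemma OccursAt.apply_add (h : OccursAt x w j) {t : ℕ} (ht : t < w.length) :
    x.get (j + t) = w[t] :=
  occursAt_iff_forall_getElem.1 h t ht

lemma occursAt_append :
    OccursAt x (u ++ v) j ↔ OccursAt x u j ∧ OccursAt x v (j + u.length) := by
  simp only [OccursAt, List.length_append, Stream'.take_add, Stream'.drop_drop]
  exact ⟨fun h => List.append_inj h (by simp), fun ⟨hu, hv⟩ => by rw [hu, hv]⟩

lemma OccursAt.of_prefix (h : OccursAt x v j) (huv : u <+: v) : OccursAt x u j := by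
  obtain ⟨s, rfl⟩ := huv
  exact (occursAt_append.1 h).1

lemma OccursAt.of_infix (h : OccursAt x v j) (huv : u <:+: v) :
    ∃ j', j ≤ j' ∧ j' + u.length ≤ j + v.length ∧ OccursAt x u j' := by
  obtain ⟨p, q, rfl⟩ := huv
  obtain ⟨hpu, -⟩ := occursAt_append.1 h
  exact ⟨j + p.length, by omega, by simp; omega, (occursAt_append.1 hpu).2⟩

end OccursAt

lemma exists_le_and_le_add_of_bounded_steps {s : ℕ → ℕ} {L : ℕ} (h0 : s 0 = 0)
    (hstep : ∀ k, s (k + 1) ≤ s k + L) (hunbdd : ∀ i, ∃ k, i ≤ s k) (i : ℕ) :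
    ∃ k, i ≤ s k ∧ s k ≤ i + L := by
  classical
  refine ⟨Nat.find (hunbdd i), Nat.find_spec (hunbdd i), ?_⟩
  cases hk : Nat.find (hunbdd i) with
  | zero => omega
  | succ k =>
    have hlt : ¬ i ≤ s k := Nat.find_min (hunbdd i) (by omega)
    have := hstep k
    omega

lemma occursAt_zero_iterate_mapWord_take {f : α → List α} {a : α} {x : Stream' α}
    (hx : ∀ n, OccursAt x ((mapWord f)^[n] [a]) 0)
    (hgrow : ∀ N : ℕ, ∃ n : ℕ, N ≤ ((mapWord f)^[n] [a]).length) (N k : ℕ) :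
    OccursAt x ((mapWord f)^[N] (Stream'.take k x)) 0 := by
  obtain ⟨n, hn⟩ := hgrow k
  have hpre : Stream'.take k x <+: (mapWord f)^[n] [a] := by
    rw [← hx n]
    exact Stream'.take_prefix_take_left _ _ _ hn
  have := hpre.iterate_mapWord (f := f) N
  rw [← Function.iterate_add_apply] at this
  exact (hx (N + n)).of_prefix this

lemma exists_occursAt_window {x : Stream' α} (g : α → List α) {w : List α} {L : ℕ}
    (hne : ∀ b, g b ≠ []) (hlen : ∀ b, (g b).length ≤ L) (hw : ∀ b, w <:+: g b)
    (hfix : ∀ k, OccursAt x (mapWord g (Stream'.take k x)) 0) (i : ℕ) :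
    ∃ j, i ≤ j ∧ j + w.length ≤ i + 2 * L ∧ OccursAt x w j := by
  set s : ℕ → ℕ := fun k => (mapWord g (Stream'.take k x)).length with hs
  have hsucc : ∀ k, s (k + 1) = s k + (g (x.get k)).length := by
    intro k
    simp only [hs, Stream'.take_succ', mapWord_append, mapWord_singleton, List.length_append]
  have hself : ∀ k, k ≤ s k := by
    intro k
    induction k with
    | zero => exact Nat.zero_le _
    | succ k ih =>
      have := List.length_pos_iff.2 (hne (x.get k))
      rw [hsucc]
      omega
  obtain ⟨k, hik, hki⟩ := exists_le_and_le_add_of_bounded_steps (s := s) (by simp [hs])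
    (fun k => by rw [hsucc]; exact Nat.add_le_add_left (hlen _) _) (fun i => ⟨i, hself i⟩) i
  have hblock : OccursAt x (g (x.get k)) (s k) := by
    have := hfix (k + 1)
    rw [Stream'.take_succ', mapWord_append, mapWord_singleton, occursAt_append] at this
    simpa using this.2
  obtain ⟨j, hkj, hjw, hj⟩ := hblock.of_infix (hw (x.get k))
  exact ⟨j, by omega, by have := hlen (x.get k); omega, hj⟩

end

theorem primitive_prolongable_fixed_point_uniformly_recurrent_general
    {α : Type*} [Fintype α] (f : α → List α) (a : α)
    (hprim : ∃ t : ℕ, ∀ b c : α, c ∈ (mapWord f)^[t] [b])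
    (hgrow : ∀ N : ℕ, ∃ n : ℕ, N ≤ ((mapWord f)^[n] [a]).length)
    (x : ℕ → α)
    (hx : ∀ (n k : ℕ) (hk : k < ((mapWord f)^[n] [a]).length),
      ((mapWord f)^[n] [a]).get ⟨k, hk⟩ = x k) :
    ∀ i₀ m : ℕ, ∃ C : ℕ, ∀ i : ℕ, ∃ j : ℕ, i ≤ j ∧ j + m ≤ i + C ∧
      ∀ t < m, x (j + t) = x (i₀ + t) := by
  intro i₀ m
  obtain ⟨t, ht⟩ := hprim
  have hxF : ∀ n, OccursAt x ((mapWord f)^[n] [a]) 0 := fun n =>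
    occursAt_iff_forall_getElem.2 fun k hk => by rw [zero_add]; exact (hx n k hk).symm
  obtain ⟨n, hn⟩ := hgrow (i₀ + m + 1)
  set g : α → List α := fun b => (mapWord f)^[n + t] [b]
  have hw : ∀ b, (mapWord f)^[n] [a] <:+: g b := fun b => iterate_mapWord_infix_of_mem (ht b a) n
  have hne : ∀ b, g b ≠ [] := fun b hb => by
    have := (hw b).length_le
    simp only [hb, List.length_nil] at this
    omega
  obtain ⟨L, hL⟩ := (Set.finite_range fun b => (g b).length).bddAbove
  have hfix : ∀ k, OccursAt x (mapWord g (Stream'.take k x)) 0 := fun k => by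
    rw [← iterate_mapWord_eq_mapWord]
    exact occursAt_zero_iterate_mapWord_take hxF hgrow _ k
  refine ⟨2 * L, fun i => ?_⟩
  obtain ⟨j, hij, hjL, hj⟩ :=
    exists_occursAt_window g hne (fun b => hL ⟨b, rfl⟩) hw hfix i
  refine ⟨j + i₀, by omega, by omega, fun s hs => ?_⟩
  show Stream'.get x (j + i₀ + s) = Stream'.get x (i₀ + s)
  rw [add_assoc, hj.apply_add (by omega), ← (hxF n).apply_add, zero_add]

theorem primitive_prolongable_fixed_point_uniformly_recurrent
    {α : Type*} [Fintype α] (f : α → List α) (a : α)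
    (hprim : ∃ t : ℕ, ∀ b c : α, c ∈ (mapWord f)^[t] [b])
    (hpro : ∃ r : List α, f a = a :: r)
    (hgrow : ∀ N : ℕ, ∃ n : ℕ, N ≤ ((mapWord f)^[n] [a]).length)
    (x : ℕ → α)
    (hx : ∀ (n k : ℕ) (hk : k < ((mapWord f)^[n] [a]).length),
      ((mapWord f)^[n] [a]).get ⟨k, hk⟩ = x k) :
    ∀ i₀ m : ℕ, ∃ C : ℕ, ∀ i : ℕ, ∃ j : ℕ, i ≤ j ∧ j + m ≤ i + C ∧
      ∀ t < m, x (j + t) = x (i₀ + t) :=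
  primitive_prolongable_fixed_point_uniformly_recurrent_general f a hprim hgrow x hx
end

section
/- For p = 5, the sequence (T_n mod 5)_{n≥0} is the fixed point f^ω(1) of the morphism f on the alphabet {1,2,3,4} given by f(1)=11324, f(2)=22143, f(3)=33412, f(4)=44231; that is, T_{5n+k} ≡ T_n · T_k (mod 5) for 0 ≤ k ≤ 4, with (T_0,…,T_4) ≡ (1,1,3,2,4) (mod 5). -/
/-!
`T_n` is the coefficient of `X ^ n` in `P ^ n`, `P = X ^ 2 + X + 1`. Over `ZMod p` the Frobenius
gives `P ^ (p * n + k) = P(X ^ p) ^ n * P ^ k`, and as `P ^ k` has degree `2 * k < p + k` for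
`k < p`, only the product `T_n * T_k` contributes to the coefficient of `X ^ (p * n + k)`.
This is the Lucas-type congruence `T_(p * n + k) ≡ T_n * T_k (mod p)`, which for `p = 5` gives
the morphism.
-/

open Polynomial

namespace Polynomial

variable {R : Type*} [CommSemiring R]

lemma natDegree_X_sq_add_X_add_one_pow_le (k : ℕ) :
    ((X ^ 2 + X + 1 : R[X]) ^ k).natDegree ≤ 2 * k := by
  refine natDegree_pow_le.trans ?_
  have : (X ^ 2 + X + 1 : R[X]).natDegree ≤ 2 := by compute_degree
  nlinarith

lemma coeff_X_sq_add_X_add_one_pow_self (n : ℕ) :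
    ((X ^ 2 + X + 1 : R[X]) ^ n).coeff n = _root_.trinomial n := by
  rw [add_assoc, add_pow, finsetSum_coeff, _root_.trinomial, Nat.cast_sum]
  refine Finset.sum_congr rfl fun k _ => ?_
  rw [show (X ^ 2 : R[X]) ^ k * (X + 1) ^ (n - k) * (n.choose k : R[X])
      = (X + 1) ^ (n - k) * C (n.choose k : R) * X ^ (2 * k) by rw [C_eq_natCast]; ring,
    coeff_mul_X_pow']
  split_ifs with h
  · rw [coeff_mul_C, coeff_X_add_one_pow,
      Nat.choose_symm_of_eq_add (show n - k = n - 2 * k + k by omega),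
      Nat.choose_mul (show k ≤ 2 * k by omega), show 2 * k - k = k by omega]
    push_cast
    ring
  · simp [Nat.choose_eq_zero_of_lt (show n < 2 * k by omega)]

lemma coeff_expand_mul_add_of_natDegree_lt {p k : ℕ} (hk : k < p) (f : R[X]) {g : R[X]}
    (hg : g.natDegree < p + k) (n : ℕ) :
    (expand R p f * g).coeff (p * n + k) = f.coeff n * g.coeff k := by
  have hp : 0 < p := by omega
  rw [coeff_mul, Finset.sum_eq_single (p * n, k), coeff_expand_mul' hp]
  · rintro ⟨a, b⟩ hab hne
    rw [Finset.HasAntidiagonal.mem_antidiagonal] at hab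
    rw [coeff_expand hp]
    split_ifs with hpa
    · obtain ⟨m, rfl⟩ := hpa
      have hmn : m < n := by
        by_contra! hnm
        rcases hnm.eq_or_lt with rfl | hlt
        · exact hne (Prod.ext rfl (by simp only at hab; omega))
        · nlinarith
      have hb : p + k ≤ b := by nlinarith
      rw [coeff_eq_zero_of_natDegree_lt (hg.trans_le hb), mul_zero]
    · rw [zero_mul]
  · exact fun h => (h (Finset.HasAntidiagonal.mem_antidiagonal.2 rfl)).elim

end Polynomial

theorem trinomial_mul_add_modEq {p : ℕ} [Fact p.Prime] (n : ℕ) {k : ℕ} (hk : k < p) :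
    trinomial (p * n + k) ≡ trinomial n * trinomial k [MOD p] := by
  rw [← ZMod.natCast_eq_natCast_iff, Nat.cast_mul]
  simp only [← coeff_X_sq_add_X_add_one_pow_self (R := ZMod p)]
  rw [pow_add, pow_mul, ← ZMod.expand_card, ← map_pow]
  refine coeff_expand_mul_add_of_natDegree_lt hk _ ?_ n
  exact (natDegree_X_sq_add_X_add_one_pow_le k).trans_lt (by omega)

theorem trinomial_mod_five_morphic :
    trinomial 0 % 5 = 1 ∧ trinomial 1 % 5 = 1 ∧ trinomial 2 % 5 = 3 ∧
    trinomial 3 % 5 = 2 ∧ trinomial 4 % 5 = 4 ∧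
    ∀ n : ℕ, ∀ k ≤ 4, trinomial (5 * n + k) % 5 = (trinomial n * trinomial k) % 5 := by
  refine ⟨by decide, by decide, by decide, by decide, by decide, fun n k hk => ?_⟩
  have : Fact (Nat.Prime 5) := ⟨by norm_num⟩
  exact trinomial_mul_add_modEq n (by omega)
end

section
/- In the sequence (C_n mod 5)_{n≥0}, the maximal blocks of nonzero residues are: the initial block (C_0, C_1, C_2) ≡ (1,1,2) (mod 5) at position 0, and thereafter every maximal nonzero block has length exactly 4 and equals one of (1,3,3,1), (2,1,1,2), (3,4,4,3), (4,2,2,4) modulo 5. -/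
/-!
By Lucas' theorem, for `n = 5m + r` with `r ≤ 2` the identity `(n + 1) Cₙ = binom(2n, n)` gives
`Cₙ ≡ C_r · binom(2m, m) (mod 5)`, while `C_{5m+3} ≡ 0`. For `n = 5m + 4` both `n + 1` and
`binom(2n, n)` vanish mod 5, and `Cₙ = binom(2n, n) - binom(2n, n + 1)` gives
`Cₙ ≡ 2 binom(2m + 2, m + 1)` instead. Writing `a = binom(2m + 2, m + 1) mod 5`, the residues
from `5m + 3` to `5m + 8` are therefore `0, 2a, a, a, 2a, 0`: the zeros at `5m + 3` cut the
sequence into blocks `(2a, a, a, 2a)`, each either entirely zero or one of the four patterns.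
-/

/-- A maximal block of nonzero residues modulo `5` of length `L` starting at
position `i` in the sequence of Catalan numbers. -/
def catMaxNonzeroBlock5 (i L : ℕ) : Prop :=
  1 ≤ L ∧ (∀ t < L, catalan (i + t) % 5 ≠ 0) ∧
    catalan (i + L) % 5 = 0 ∧ (i = 0 ∨ catalan (i - 1) % 5 = 0)

open Nat

theorem catalan_add_choose_succ (n : ℕ) :
    catalan n + (2 * n).choose (n + 1) = centralBinom n := by
  apply Nat.eq_of_mul_eq_mul_left (Nat.add_one_pos n)
  rw [mul_add, succ_mul_catalan_eq_centralBinom, mul_comm (n + 1), choose_succ_right_eq,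
    ← centralBinom_eq_two_mul_choose, show 2 * n - n = n by omega]
  ring

theorem centralBinom_succ_eq_two_mul_choose (m : ℕ) :
    centralBinom (m + 1) = 2 * (2 * m + 1).choose (m + 1) := by
  rw [centralBinom_eq_two_mul_choose, show 2 * (m + 1) = 2 * m + 1 + 1 by ring, choose_succ_succ,
    ← choose_symm_half]
  ring

theorem succ_mul_cast_catalan_mul_add (p m r : ℕ) :
    ((r + 1 : ℕ) : ZMod p) * catalan (p * m + r) = centralBinom (p * m + r) := by
  rw [← succ_mul_catalan_eq_centralBinom, cast_mul]
  simp

section ModPrime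

variable {p : ℕ} [Fact p.Prime]

theorem cast_choose_mul_add_mul_add (a b : ℕ) {r s : ℕ} (hr : r < p) (hs : s < p) :
    ((p * a + r).choose (p * b + s) : ZMod p) = r.choose s * a.choose b := by
  have hp := (Fact.out : p.Prime).pos
  rw [(ZMod.natCast_eq_natCast_iff _ _ _).mpr Choose.choose_modEq_choose_mod_mul_choose_div_nat,
    Nat.mul_add_mod, Nat.mul_add_mod, Nat.mul_add_div hp, Nat.mul_add_div hp,
    Nat.mod_eq_of_lt hr, Nat.mod_eq_of_lt hs, Nat.div_eq_of_lt hr, Nat.div_eq_of_lt hs,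
    add_zero, add_zero, cast_mul]

theorem cast_centralBinom_mul_add_of_two_mul_lt (m : ℕ) {r : ℕ} (h : 2 * r < p) :
    (centralBinom (p * m + r) : ZMod p) = centralBinom r * centralBinom m := by
  simp only [centralBinom_eq_two_mul_choose]
  rw [show 2 * (p * m + r) = p * (2 * m) + 2 * r by ring,
    cast_choose_mul_add_mul_add _ _ h (by omega)]

theorem cast_centralBinom_mul_add_eq_zero (m : ℕ) {r : ℕ} (hr : r < p) (h : p ≤ 2 * r) :
    (centralBinom (p * m + r) : ZMod p) = 0 := by
  rw [centralBinom_eq_two_mul_choose,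
    show 2 * (p * m + r) = p * (2 * m + 1) + (2 * r - p) by
      rw [Nat.mul_succ, mul_left_comm p 2 m]; omega,
    cast_choose_mul_add_mul_add _ _ (by omega) hr, choose_eq_zero_of_lt (by omega), cast_zero,
    zero_mul]

theorem cast_catalan_mul_add_of_two_mul_lt (m : ℕ) {r : ℕ} (h : 2 * r < p) :
    (catalan (p * m + r) : ZMod p) = catalan r * centralBinom m := by
  have hp := (Fact.out : p.Prime).two_le
  have hr : ((r + 1 : ℕ) : ZMod p) ≠ 0 := by
    rw [ne_eq, ZMod.natCast_eq_zero_iff]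
    exact Nat.not_dvd_of_pos_of_lt (by omega) (by omega)
  apply mul_left_cancel₀ hr
  rw [succ_mul_cast_catalan_mul_add, cast_centralBinom_mul_add_of_two_mul_lt m h,
    ← succ_mul_catalan_eq_centralBinom r]
  push_cast
  ring

theorem cast_catalan_mul_add_eq_zero (m : ℕ) {r : ℕ} (hr : r + 1 < p) (h : p ≤ 2 * r) :
    (catalan (p * m + r) : ZMod p) = 0 := by
  have hr' : ((r + 1 : ℕ) : ZMod p) ≠ 0 := by
    rw [ne_eq, ZMod.natCast_eq_zero_iff]
    exact Nat.not_dvd_of_pos_of_lt (by omega) hr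
  have := succ_mul_cast_catalan_mul_add p m r
  rw [cast_centralBinom_mul_add_eq_zero m (by omega) h] at this
  exact (mul_eq_zero.mp this).resolve_left hr'

theorem two_mul_cast_catalan_mul_add_sub_one (m : ℕ) :
    2 * (catalan (p * m + (p - 1)) : ZMod p) = -centralBinom (m + 1) := by
  have hp := (Fact.out : p.Prime).two_le
  set n := p * m + (p - 1)
  have hsum : (catalan n : ZMod p) + (2 * n).choose (n + 1) = 0 := by
    rw [← cast_add, catalan_add_choose_succ]
    exact cast_centralBinom_mul_add_eq_zero m (by omega) (by omega)
  have hchoose : ((2 * n).choose (n + 1) : ZMod p) = (2 * m + 1).choose (m + 1) := by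
    rw [show 2 * n = p * (2 * m + 1) + (p - 2) by rw [Nat.mul_succ, mul_left_comm p 2 m]; omega,
      show n + 1 = p * (m + 1) + 0 by rw [Nat.mul_succ]; omega,
      cast_choose_mul_add_mul_add _ _ (by omega) (by omega), choose_zero_right, cast_one, one_mul]
  rw [centralBinom_succ_eq_two_mul_choose, cast_mul, ← hchoose, eq_neg_of_add_eq_zero_left hsum]
  push_cast; ring

end ModPrime

section ModFive

local instance : Fact (Nat.Prime 5) := ⟨Nat.prime_five⟩

theorem cast_catalan_five_mul (m : ℕ) : (catalan (5 * m) : ZMod 5) = centralBinom m := by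
  simpa using cast_catalan_mul_add_of_two_mul_lt (p := 5) m (r := 0) (by norm_num)

theorem cast_catalan_five_mul_add_one (m : ℕ) :
    (catalan (5 * m + 1) : ZMod 5) = centralBinom m := by
  simpa using cast_catalan_mul_add_of_two_mul_lt (p := 5) m (r := 1) (by norm_num)

theorem cast_catalan_five_mul_add_two (m : ℕ) :
    (catalan (5 * m + 2) : ZMod 5) = 2 * centralBinom m := by
  simpa [catalan_two] using cast_catalan_mul_add_of_two_mul_lt (p := 5) m (r := 2) (by norm_num)

theorem cast_catalan_five_mul_add_three (m : ℕ) : (catalan (5 * m + 3) : ZMod 5) = 0 :=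
  cast_catalan_mul_add_eq_zero m (by norm_num) (by norm_num)

theorem cast_catalan_five_mul_add_four (m : ℕ) :
    (catalan (5 * m + 4) : ZMod 5) = 2 * centralBinom (m + 1) := by
  have h := two_mul_cast_catalan_mul_add_sub_one (p := 5) m
  linear_combination (norm := ring_nf) 3 * h
  reduce_mod_char

theorem cast_catalan_eq_zero_of_pred {i : ℕ} (hi : 1 ≤ i) (hi4 : i % 5 ≠ 4)
    (hpred : (catalan (i - 1) : ZMod 5) = 0) : (catalan i : ZMod 5) = 0 := by
  obtain ⟨q, r, hr, rfl⟩ : ∃ q r, r < 5 ∧ i = 5 * q + r :=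
    ⟨i / 5, i % 5, i.mod_lt (by norm_num), (Nat.div_add_mod i 5).symm⟩
  interval_cases r
  · obtain ⟨k, rfl⟩ : ∃ k, q = k + 1 := ⟨q - 1, by omega⟩
    rw [show 5 * (k + 1) + 0 - 1 = 5 * k + 4 by omega, cast_catalan_five_mul_add_four] at hpred
    rw [add_zero, cast_catalan_five_mul]
    exact (mul_eq_zero.mp hpred).resolve_left (by decide)
  · rw [add_tsub_cancel_right, cast_catalan_five_mul] at hpred
    rw [cast_catalan_five_mul_add_one, hpred]
  · rw [show 5 * q + 2 - 1 = 5 * q + 1 by omega, cast_catalan_five_mul_add_one] at hpred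
    rw [cast_catalan_five_mul_add_two, hpred, mul_zero]
  · exact cast_catalan_five_mul_add_three q
  · omega

theorem cast_catalan_five_mul_add_four_window (m : ℕ) :
    (catalan (5 * m + 4) : ZMod 5) = 2 * centralBinom (m + 1) ∧
      (catalan (5 * m + 4 + 1) : ZMod 5) = centralBinom (m + 1) ∧
      (catalan (5 * m + 4 + 2) : ZMod 5) = centralBinom (m + 1) ∧
      (catalan (5 * m + 4 + 3) : ZMod 5) = 2 * centralBinom (m + 1) ∧
      (catalan (5 * m + 4 + 4) : ZMod 5) = 0 := by
  refine ⟨cast_catalan_five_mul_add_four m, ?_, ?_, ?_, ?_⟩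
  · rw [show 5 * m + 4 + 1 = 5 * (m + 1) by ring, cast_catalan_five_mul]
  · rw [show 5 * m + 4 + 2 = 5 * (m + 1) + 1 by ring, cast_catalan_five_mul_add_one]
  · rw [show 5 * m + 4 + 3 = 5 * (m + 1) + 2 by ring, cast_catalan_five_mul_add_two]
  · rw [show 5 * m + 4 + 4 = 5 * (m + 1) + 3 by ring, cast_catalan_five_mul_add_three]

end ModFive

theorem ZMod.val_two_mul_pattern_of_ne_zero (a : ZMod 5) (ha : a ≠ 0) :
    [(2 * a).val, a.val, a.val, (2 * a).val] = [1, 3, 3, 1] ∨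
      [(2 * a).val, a.val, a.val, (2 * a).val] = [2, 1, 1, 2] ∨
      [(2 * a).val, a.val, a.val, (2 * a).val] = [3, 4, 4, 3] ∨
      [(2 * a).val, a.val, a.val, (2 * a).val] = [4, 2, 2, 4] := by
  revert a
  decide

theorem catalan_mod_five_nonzero_blocks :
    (catMaxNonzeroBlock5 0 3 ∧ catalan 0 % 5 = 1 ∧ catalan 1 % 5 = 1 ∧
      catalan 2 % 5 = 2) ∧
    (∀ i L : ℕ, 1 ≤ i → catMaxNonzeroBlock5 i L → L = 4 ∧
      ([catalan i % 5, catalan (i+1) % 5, catalan (i+2) % 5,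
        catalan (i+3) % 5] = [1,3,3,1] ∨
       [catalan i % 5, catalan (i+1) % 5, catalan (i+2) % 5,
        catalan (i+3) % 5] = [2,1,1,2] ∨
       [catalan i % 5, catalan (i+1) % 5, catalan (i+2) % 5,
        catalan (i+3) % 5] = [3,4,4,3] ∨
       [catalan i % 5, catalan (i+1) % 5, catalan (i+2) % 5,
        catalan (i+3) % 5] = [4,2,2,4])) := by
  refine ⟨⟨⟨by norm_num, fun t ht => ?_, by simp [catalan_three], Or.inl rfl⟩,
    by simp [catalan_two]⟩, ?_⟩
  · interval_cases t <;> simp [catalan_two]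
  rintro i L hi ⟨hL, hnz, hzero, hpred⟩
  have hmod (n : ℕ) : catalan n % 5 = 0 ↔ (catalan n : ZMod 5) = 0 := by
    rw [ZMod.natCast_eq_zero_iff, Nat.dvd_iff_mod_eq_zero]
  have hstart : (catalan i : ZMod 5) ≠ 0 := (hmod i).not.mp (hnz 0 hL)
  have hi4 : i % 5 = 4 := by
    by_contra hi4
    exact hstart (cast_catalan_eq_zero_of_pred hi hi4 ((hmod _).mp (hpred.resolve_left (by omega))))
  obtain ⟨m, rfl⟩ : ∃ m, i = 5 * m + 4 := ⟨i / 5, by omega⟩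
  obtain ⟨h0, h1, h2, h3, h4⟩ := cast_catalan_five_mul_add_four_window m
  set a : ZMod 5 := ((centralBinom (m + 1) : ℕ) : ZMod 5)
  have ha : a ≠ 0 := fun h => hstart (by rw [h0, h, mul_zero])
  have hL4 : L = 4 := by
    have hle : L ≤ 4 := not_lt.mp fun h => hnz 4 h ((hmod _).mpr h4)
    have hzero' := (hmod _).mp hzero
    interval_cases L <;> simp_all
  refine ⟨hL4, ?_⟩
  simp only [← ZMod.val_natCast 5, h0, h1, h2, h3]
  exact ZMod.val_two_mul_pattern_of_ne_zero a ha
end
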